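/- arXiv:0909.0827 — 6 statements merged into one kernel-verified Lean document; each statement's English description precedes it below -/
import Mathlib

section
/- Let r, l ≥ 0 and set f(x) = |x|^r, g(x) = |x|^l. For each n ∈ ℕ let M_n ∈ ℕ with M_n → ∞, and let μ_{n,m}, μ'_{n,m}, μ''_{n,m} (1 ≤ m ≤ M_n) be real random variables. Assume there exists ε > 0 such that for every q ∈ (0, 2(r+l)+ε) there is a constant C_q with E[(1 + |μ_{n,m}| + |μ'_{n,m}| + |μ''_{n,m}|)^q] ≤ C_q for all n and all 1 ≤ m ≤ M_n, and assume (1/M_n) Σ_{m=1}^{M_n} E[|μ'_{n,m} − μ''_{n,m}|²] → 0 as n → ∞. Then (1/M_n) Σ_{m=1}^{M_n} E[f(μ_{n,m})² (g(μ'_{n,m}) − g(μ''_{n,m}))²] → 0 as n → ∞. -/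
/-!
For `0 < s ≤ min l 1`, the map `t ↦ t ^ l` is `s`-Hölder on `[0, Z]` with constant
`max l 1 * Z ^ (l - s)`. Taking `Z = 1 + |μ| + |μ'| + |μ''|` bounds the integrand by
`max l 1 ^ 2 * Z ^ (2 (r + l - s)) * |μ' - μ''| ^ (2 s)`, and Hölder's inequality with exponents
`1 / (1 - s)` and `1 / s` bounds its expectation by a moment of `Z` of order
`q = 2 (r + l - s) / (1 - s)` to the power `1 - s`, times `E[|μ' - μ''|²] ^ s`. As `s → 0`,
`q → 2 (r + l)`, so a small `s` makes `q < 2 (r + l) + ε` and the moment is bounded uniformly.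
Concavity of `x ↦ x ^ s` moves the average over `m` inside the power, and the bound tends to `0`.
-/

open MeasureTheory ProbabilityTheory Filter
open scoped ENNReal Topology

namespace Real

theorem rpow_le_rpow_sub_mul_rpow {d Z t u : ℝ} (hd : 0 ≤ d) (hdZ : d ≤ Z) (ht : 0 < t)
    (htu : t ≤ u) : d ^ u ≤ Z ^ (u - t) * d ^ t := by
  rw [← sub_add_cancel u t, rpow_add' hd (by linarith), add_sub_cancel_right]
  gcongr

theorem rpow_sub_rpow_le_sub_rpow {a b p : ℝ} (hb : 0 ≤ b) (hba : b ≤ a) (hp0 : 0 ≤ p)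
    (hp1 : p ≤ 1) : a ^ p - b ^ p ≤ (a - b) ^ p := by
  have := rpow_add_le_add_rpow (sub_nonneg.2 hba) hb hp0 hp1
  rw [sub_add_cancel] at this
  linarith

theorem rpow_sub_rpow_le_mul_rpow_mul_sub {a b p : ℝ} (hb : 0 ≤ b) (hba : b ≤ a) (hp : 1 ≤ p) :
    a ^ p - b ^ p ≤ p * a ^ (p - 1) * (a - b) := by
  rcases (hb.trans hba).eq_or_lt with rfl | ha
  · obtain rfl : b = 0 := le_antisymm hba hb
    simp
  have bernoulli := one_add_mul_self_le_rpow_one_add (s := b / a - 1) (by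
    have := div_nonneg hb ha.le; linarith) hp
  rw [add_sub_cancel, div_rpow hb ha.le, le_div_iff₀ (rpow_pos_of_pos ha p)] at bernoulli
  have hpow : a ^ p = a ^ (p - 1) * a := by
    rw [← rpow_add_one ha.ne', sub_add_cancel]
  have key : (1 + p * (b / a - 1)) * a ^ p = a ^ p - p * a ^ (p - 1) * (a - b) := by
    rw [hpow]; field_simp; ring
  linarith

theorem abs_rpow_sub_rpow_le {a b Z l s : ℝ} (ha : 0 ≤ a) (hb : 0 ≤ b) (haZ : a ≤ Z)
    (hbZ : b ≤ Z) (hs0 : 0 < s) (hsl : s ≤ l) (hs1 : s ≤ 1) :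
    |a ^ l - b ^ l| ≤ max l 1 * Z ^ (l - s) * |a - b| ^ s := by
  wlog hba : b ≤ a generalizing a b
  · rw [abs_sub_comm, abs_sub_comm a]
    exact this hb ha hbZ haZ (le_of_not_ge hba)
  have hd : 0 ≤ a - b := sub_nonneg.2 hba
  have hdZ : a - b ≤ Z := by linarith
  rw [abs_of_nonneg (sub_nonneg.2 (rpow_le_rpow hb hba (by linarith))), abs_of_nonneg hd]
  have hZ : 0 ≤ Z := ha.trans haZ
  rcases le_total l 1 with hl1 | hl1
  · calc a ^ l - b ^ l ≤ (a - b) ^ l := rpow_sub_rpow_le_sub_rpow hb hba (by linarith) hl1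
      _ ≤ Z ^ (l - s) * (a - b) ^ s := rpow_le_rpow_sub_mul_rpow hd hdZ hs0 hsl
      _ ≤ max l 1 * Z ^ (l - s) * (a - b) ^ s := by
        rw [mul_assoc]
        exact le_mul_of_one_le_left (by positivity) (le_max_right l 1)
  · calc a ^ l - b ^ l ≤ l * a ^ (l - 1) * (a - b) := rpow_sub_rpow_le_mul_rpow_mul_sub hb hba hl1
      _ ≤ l * Z ^ (l - 1) * (Z ^ (1 - s) * (a - b) ^ s) := by
        have hd1 : a - b ≤ Z ^ (1 - s) * (a - b) ^ s := by
          simpa using rpow_le_rpow_sub_mul_rpow hd hdZ hs0 hs1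
        gcongr
      _ = l * Z ^ (l - s) * (a - b) ^ s := by
        rw [← mul_assoc, mul_assoc l, ← rpow_add_of_nonneg hZ (by linarith) (by linarith)]
        ring_nf
      _ ≤ max l 1 * Z ^ (l - s) * (a - b) ^ s := by
        gcongr
        exact le_max_left l 1

theorem sq_abs_rpow_mul_sq_abs_rpow_sub_le {x y z Z r l s : ℝ} (hxZ : |x| ≤ Z) (hyZ : |y| ≤ Z)
    (hzZ : |z| ≤ Z) (hr : 0 ≤ r) (hs0 : 0 < s) (hsl : s ≤ l) (hs1 : s ≤ 1) :
    (|x| ^ r) ^ 2 * (|y| ^ l - |z| ^ l) ^ 2 ≤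
      max l 1 ^ 2 * Z ^ (2 * (r + l - s)) * ((y - z) ^ 2) ^ s := by
  have hZ : 0 ≤ Z := (abs_nonneg x).trans hxZ
  have hdiff : |(|y| ^ l - |z| ^ l)| ≤ max l 1 * Z ^ (l - s) * |y - z| ^ s :=
    (abs_rpow_sub_rpow_le (abs_nonneg y) (abs_nonneg z) hyZ hzZ hs0 hsl hs1).trans <|
      mul_le_mul_of_nonneg_left (rpow_le_rpow (abs_nonneg _) (abs_abs_sub_abs_le_abs_sub y z)
        hs0.le) (by positivity)
  have hprod : |x| ^ r * |(|y| ^ l - |z| ^ l)| ≤ max l 1 * Z ^ (r + l - s) * |y - z| ^ s := by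
    calc |x| ^ r * |(|y| ^ l - |z| ^ l)| ≤ Z ^ r * (max l 1 * Z ^ (l - s) * |y - z| ^ s) := by
          gcongr
      _ = max l 1 * Z ^ (r + l - s) * |y - z| ^ s := by
          rw [add_sub_assoc, rpow_add_of_nonneg hZ hr (by linarith)]; ring
  have hZ2 : Z ^ (2 * (r + l - s)) = (Z ^ (r + l - s)) ^ 2 := by
    rw [mul_comm, rpow_mul hZ, rpow_two]
  have hyz2 : ((y - z) ^ 2) ^ s = (|y - z| ^ s) ^ 2 := by
    rw [← sq_abs, ← rpow_two, ← rpow_mul (abs_nonneg _), mul_comm, rpow_mul (abs_nonneg _),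
      rpow_two]
  rw [hZ2, hyz2, ← sq_abs (|y| ^ l - |z| ^ l)]
  calc _ = (|x| ^ r * |(|y| ^ l - |z| ^ l)|) ^ 2 := by ring
    _ ≤ (max l 1 * Z ^ (r + l - s) * |y - z| ^ s) ^ 2 := by gcongr
    _ = _ := by ring

end Real

theorem MeasureTheory.lintegral_sq_abs_rpow_mul_sq_abs_rpow_sub_le {Ω : Type*} [MeasurableSpace Ω]
    {ν : Measure Ω} {X Y W : Ω → ℝ} (hX : AEMeasurable X ν) (hY : AEMeasurable Y ν)
    (hW : AEMeasurable W ν) {r l s : ℝ} (hr : 0 ≤ r) (hs0 : 0 < s) (hs1 : s < 1) (hsl : s ≤ l) :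
    ∫⁻ ω, ENNReal.ofReal ((|X ω| ^ r) ^ 2 * (|Y ω| ^ l - |W ω| ^ l) ^ 2) ∂ν ≤
      ENNReal.ofReal (max l 1 ^ 2) *
        (∫⁻ ω, ENNReal.ofReal ((1 + |X ω| + |Y ω| + |W ω|) ^ (2 * (r + l - s) / (1 - s))) ∂ν)
          ^ (1 - s) * (∫⁻ ω, ENNReal.ofReal ((Y ω - W ω) ^ 2) ∂ν) ^ s := by
  set Z : Ω → ℝ := fun ω => 1 + |X ω| + |Y ω| + |W ω|
  have hZ : ∀ ω, 0 ≤ Z ω := fun ω => by positivity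
  have hpt : ∀ ω, ENNReal.ofReal ((|X ω| ^ r) ^ 2 * (|Y ω| ^ l - |W ω| ^ l) ^ 2) ≤
      ENNReal.ofReal (max l 1 ^ 2) * (ENNReal.ofReal (Z ω ^ (2 * (r + l - s) / (1 - s))) ^ (1 - s)
        * ENNReal.ofReal ((Y ω - W ω) ^ 2) ^ s) := fun ω => by
    rw [ENNReal.ofReal_rpow_of_nonneg (by positivity) (by linarith), ← Real.rpow_mul (hZ ω),
      div_mul_cancel₀ _ (by linarith), ENNReal.ofReal_rpow_of_nonneg (by positivity) hs0.le,
      ← ENNReal.ofReal_mul (by positivity), ← ENNReal.ofReal_mul (by positivity), ← mul_assoc]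
    refine ENNReal.ofReal_le_ofReal
      (Real.sq_abs_rpow_mul_sq_abs_rpow_sub_le ?_ ?_ ?_ hr hs0 hsl hs1.le) <;>
      simp only [Z] <;> linarith [abs_nonneg (X ω), abs_nonneg (Y ω), abs_nonneg (W ω)]
  calc _ ≤ _ := lintegral_mono hpt
    _ = _ := lintegral_const_mul' _ _ ENNReal.ofReal_ne_top
    _ ≤ _ := by
      rw [mul_assoc]
      gcongr
      exact ENNReal.lintegral_mul_norm_pow_le (by fun_prop) (by fun_prop) (by linarith) hs0.le
        (by ring)

theorem ENNReal.inv_card_mul_sum_rpow_le {ι : Type*} (t : Finset ι) (V : ι → ℝ≥0∞) {p : ℝ}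
    (hp0 : 0 < p) (hp1 : p ≤ 1) :
    (t.card : ℝ≥0∞)⁻¹ * ∑ i ∈ t, V i ^ p ≤ ((t.card : ℝ≥0∞)⁻¹ * ∑ i ∈ t, V i) ^ p := by
  rcases t.eq_empty_or_nonempty with rfl | ht
  · simp
  have hw : ∑ _i ∈ t, (t.card : ℝ≥0∞)⁻¹ = 1 := by
    rw [Finset.sum_const, nsmul_eq_mul, ENNReal.mul_inv_cancel (by simpa using ht.ne_empty)
      (ENNReal.natCast_ne_top _)]
  have := ENNReal.rpow_arith_mean_le_arith_mean_rpow t _ (fun i => V i ^ p) hw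
    (one_le_inv₀ hp0 |>.2 hp1)
  simp only [← ENNReal.rpow_mul, mul_inv_cancel₀ hp0.ne', ENNReal.rpow_one] at this
  rw [Finset.mul_sum, Finset.mul_sum, ← ENNReal.rpow_inv_le_iff hp0]
  exact this

theorem ENNReal.inv_card_mul_sum_le_mul_rpow {ι : Type*} {t : Finset ι} {a b : ι → ℝ≥0∞}
    {K : ℝ≥0∞} {p : ℝ} (hp0 : 0 < p) (hp1 : p ≤ 1) (hab : ∀ i ∈ t, a i ≤ K * b i ^ p) :
    (t.card : ℝ≥0∞)⁻¹ * ∑ i ∈ t, a i ≤ K * ((t.card : ℝ≥0∞)⁻¹ * ∑ i ∈ t, b i) ^ p :=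
  calc (t.card : ℝ≥0∞)⁻¹ * ∑ i ∈ t, a i ≤ (t.card : ℝ≥0∞)⁻¹ * ∑ i ∈ t, K * b i ^ p := by
        gcongr with i hi
        exact hab i hi
    _ = K * ((t.card : ℝ≥0∞)⁻¹ * ∑ i ∈ t, b i ^ p) := by rw [← Finset.mul_sum, mul_left_comm]
    _ ≤ K * ((t.card : ℝ≥0∞)⁻¹ * ∑ i ∈ t, b i) ^ p := by
        gcongr
        exact inv_card_mul_sum_rpow_le t b hp0 hp1

theorem exists_pos_lt_one_lt_and_div_lt {r l ε : ℝ} (hl : 0 < l) (hε : 0 < ε) :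
    ∃ s, 0 < s ∧ s < 1 ∧ s < l ∧ 2 * (r + l - s) / (1 - s) < 2 * (r + l) + ε := by
  have hcont : ContinuousAt (fun s : ℝ => 2 * (r + l - s) / (1 - s)) 0 :=
    ContinuousAt.div (by fun_prop) (by fun_prop) (by norm_num)
  have hlim : ∀ᶠ s in 𝓝 (0 : ℝ), 2 * (r + l - s) / (1 - s) < 2 * (r + l) + ε :=
    hcont.eventually_lt continuousAt_const (by simpa using hε)
  have hright : ∀ᶠ s in 𝓝[>] (0 : ℝ), (2 * (r + l - s) / (1 - s) < 2 * (r + l) + ε ∧ s < 1 ∧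
      s < l) ∧ 0 < s := (eventually_nhdsWithin_of_eventually_nhds
    (hlim.and ((gt_mem_nhds one_pos).and (gt_mem_nhds hl)))).and self_mem_nhdsWithin
  exact hright.exists.imp fun s ⟨⟨hQ, hs1, hsl⟩, hs0⟩ => ⟨hs0, hs1, hsl, hQ⟩

theorem modulated_bipower_approximation_lemma_general
    {Ω : Type*} [MeasureSpace Ω]
    (r l : ℝ) (hr : 0 ≤ r) (hl : 0 ≤ l)
    (M : ℕ → ℕ)
    (μ μ' μ'' : ℕ → ℕ → Ω → ℝ)
    (hμmeas : ∀ n m, Measurable (μ n m))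
    (hμ'meas : ∀ n m, Measurable (μ' n m))
    (hμ''meas : ∀ n m, Measurable (μ'' n m))
    (ε : ℝ) (hε : 0 < ε)
    (hmom : ∀ q : ℝ, 0 < q → q < 2 * (r + l) + ε → ∃ C : ℝ,
      ∀ n m, 1 ≤ m → m ≤ M n →
        ∫⁻ ω, ENNReal.ofReal
            ((1 + |μ n m ω| + |μ' n m ω| + |μ'' n m ω|) ^ q) ∂ℙ
          ≤ ENNReal.ofReal C)
    (hdiff : Tendsto (fun n => (M n : ℝ≥0∞)⁻¹ *
        ∑ m ∈ Finset.Icc 1 (M n),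
          ∫⁻ ω, ENNReal.ofReal ((μ' n m ω - μ'' n m ω) ^ 2) ∂ℙ)
      atTop (nhds 0)) :
    Tendsto (fun n => (M n : ℝ≥0∞)⁻¹ *
        ∑ m ∈ Finset.Icc 1 (M n),
          ∫⁻ ω, ENNReal.ofReal
            ((|μ n m ω| ^ r) ^ 2 * (|μ' n m ω| ^ l - |μ'' n m ω| ^ l) ^ 2) ∂ℙ)
      atTop (nhds 0) := by
  rcases hl.eq_or_lt with rfl | hl
  · simp
  obtain ⟨s, hs0, hs1, hsl, hQ⟩ := exists_pos_lt_one_lt_and_div_lt (r := r) hl hε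
  obtain ⟨C, hC⟩ := hmom _ (div_pos (by linarith) (by linarith)) hQ
  set K := ENNReal.ofReal (max l 1 ^ 2) * ENNReal.ofReal C ^ (1 - s)
  have hbound : ∀ n, (M n : ℝ≥0∞)⁻¹ * ∑ m ∈ Finset.Icc 1 (M n), ∫⁻ ω, ENNReal.ofReal
      ((|μ n m ω| ^ r) ^ 2 * (|μ' n m ω| ^ l - |μ'' n m ω| ^ l) ^ 2) ∂ℙ ≤
      K * ((M n : ℝ≥0∞)⁻¹ * ∑ m ∈ Finset.Icc 1 (M n),
        ∫⁻ ω, ENNReal.ofReal ((μ' n m ω - μ'' n m ω) ^ 2) ∂ℙ) ^ s := fun n => by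
    have hcard : ((Finset.Icc 1 (M n)).card : ℝ≥0∞) = M n := by simp
    rw [← hcard]
    refine ENNReal.inv_card_mul_sum_le_mul_rpow hs0 hs1.le fun m hm => ?_
    obtain ⟨hm1, hm2⟩ := Finset.mem_Icc.1 hm
    refine (lintegral_sq_abs_rpow_mul_sq_abs_rpow_sub_le (hμmeas n m).aemeasurable
      (hμ'meas n m).aemeasurable (hμ''meas n m).aemeasurable hr hs0 hs1 hsl.le).trans ?_
    gcongr ?_ * _
    simp only [K]
    gcongr
    exact hC n m hm1 hm2
  have hK : K ≠ ⊤ := ENNReal.mul_ne_top ENNReal.ofReal_ne_top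
    (ENNReal.rpow_ne_top_of_nonneg (by linarith) ENNReal.ofReal_ne_top)
  have hlim := ENNReal.Tendsto.const_mul
    (((ENNReal.continuous_rpow_const (y := s)).tendsto 0).comp hdiff) (.inr hK)
  rw [ENNReal.zero_rpow_of_pos hs0, mul_zero] at hlim
  exact tendsto_of_tendsto_of_tendsto_of_le_of_le tendsto_const_nhds hlim (fun _ => zero_le)
    hbound

/-- **Lemma 2 of Podolskij–Vetter (2009).**
If the triangular arrays `μ, μ', μ''` have moments of all orders `q < 2(r+l)+ε`
bounded uniformly, and the averaged second moments of `μ' - μ''` tend to zero,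
then the averaged expectations `E[f²(μₘ)(g(μ'ₘ) - g(μ''ₘ))²]` with
`f(x) = |x|^r`, `g(x) = |x|^l` tend to zero as well. -/
theorem modulated_bipower_approximation_lemma
    {Ω : Type*} [MeasureSpace Ω] [IsProbabilityMeasure (ℙ : Measure Ω)]
    (r l : ℝ) (hr : 0 ≤ r) (hl : 0 ≤ l)
    (M : ℕ → ℕ) (hM : Tendsto M atTop atTop)
    (μ μ' μ'' : ℕ → ℕ → Ω → ℝ)
    (hμmeas : ∀ n m, Measurable (μ n m))
    (hμ'meas : ∀ n m, Measurable (μ' n m))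
    (hμ''meas : ∀ n m, Measurable (μ'' n m))
    (ε : ℝ) (hε : 0 < ε)
    (hmom : ∀ q : ℝ, 0 < q → q < 2 * (r + l) + ε → ∃ C : ℝ,
      ∀ n m, 1 ≤ m → m ≤ M n →
        ∫⁻ ω, ENNReal.ofReal
            ((1 + |μ n m ω| + |μ' n m ω| + |μ'' n m ω|) ^ q) ∂ℙ
          ≤ ENNReal.ofReal C)
    (hdiff : Tendsto (fun n => (M n : ℝ≥0∞)⁻¹ *
        ∑ m ∈ Finset.Icc 1 (M n),
          ∫⁻ ω, ENNReal.ofReal ((μ' n m ω - μ'' n m ω) ^ 2) ∂ℙ)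
      atTop (nhds 0)) :
    Tendsto (fun n => (M n : ℝ≥0∞)⁻¹ *
        ∑ m ∈ Finset.Icc 1 (M n),
          ∫⁻ ω, ENNReal.ofReal
            ((|μ n m ω| ^ r) ^ 2 * (|μ' n m ω| ^ l - |μ'' n m ω| ^ l) ^ 2) ∂ℙ)
      atTop (nhds 0) :=
  modulated_bipower_approximation_lemma_general r l hr hl M μ μ' μ'' hμmeas hμ'meas hμ''meas ε hε
    hmom hdiff
end

section
/- With K_n = ⌈c₁√n⌉ and N_n = ⌈c₁c₂√n⌉ for constants c₁ > 0 and c₂ > 1, the deterministic limit lim_{n→∞} (1/(√n (N_n − K_n + 1)²)) Σ_{i=0}^{N_n − K_n} Σ_{j=0}^{N_n − K_n} max(K_n − |i − j|, 0) = ν₁ holds, where ν₁ = c₁(3c₂ − 4 + max((2 − c₂)³, 0))/(3(c₂ − 1)²). -/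
open Filter

/-- `K_n = ⌈c₁ √n⌉`. -/
noncomputable def Kn (c₁ : ℝ) (n : ℕ) : ℕ := ⌈c₁ * Real.sqrt n⌉₊

/-- `N_n = ⌈c₁ c₂ √n⌉`. -/
noncomputable def Nn (c₁ c₂ : ℝ) (n : ℕ) : ℕ := ⌈c₁ * c₂ * Real.sqrt n⌉₊

/-- `ν₁ = c₁ (3c₂ - 4 + max((2 - c₂)³, 0)) / (3(c₂ - 1)²)`. -/
noncomputable def nu₁ (c₁ c₂ : ℝ) : ℝ :=
  c₁ * (3 * c₂ - 4 + max ((2 - c₂) ^ 3) 0) / (3 * (c₂ - 1) ^ 2)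

/-!
With `d = |i - j|`, the double sum is `2 ∑_{d < m} (m - d) max (K - d) 0 - m K`, an explicit cubic in
`m = N - K + 1`, `K` and `min m K`. Divided by `√n ^ 3` it is the same homogeneous cubic evaluated at
`m / √n → c₁ (c₂ - 1)`, `K / √n → c₁`, `min m K / √n` and the grid spacing `1 / √n → 0`; since
`√n m² = √n ^ 3 (m / √n) ^ 2`, the limit is read off by continuity.
-/

open Finset Topology

lemma sum_range_sum_range_comp_abs_sub (F : ℝ → ℝ) (m : ℕ) :
    ∑ i ∈ range m, ∑ j ∈ range m, F |(i : ℝ) - j|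
      = 2 * ∑ d ∈ range m, ((m : ℝ) - d) * F d - m * F 0 := by
  induction m with
  | zero => simp
  | succ m ih =>
    have hcol : ∑ i ∈ range m, F |(i : ℝ) - m| = ∑ d ∈ range m, F (d + 1) := by
      rw [← sum_range_reflect (fun d => F (d + 1))]
      refine sum_congr rfl fun i hi => ?_
      have hi : i < m := mem_range.mp hi
      rw [abs_sub_comm, abs_of_nonneg (by simp [hi.le]), Nat.cast_sub (by omega),
        Nat.cast_sub (by omega)]
      push_cast
      ring_nf
    have hrow : ∑ j ∈ range m, F |(m : ℝ) - j| = ∑ i ∈ range m, F |(i : ℝ) - m| :=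
      sum_congr rfl fun _ _ => by rw [abs_sub_comm]
    have hsucc := sum_range_succ' (fun d : ℕ => F d) m
    rw [sum_range_succ] at hsucc
    simp only [sum_range_succ, sum_add_distrib, ih, hrow, hcol, sub_self, abs_zero]
    have hshift : ∑ d ∈ range m, (((m + 1 : ℕ) : ℝ) - d) * F d
        = ∑ d ∈ range m, ((m : ℝ) - d) * F d + ∑ d ∈ range m, F d := by
      rw [← sum_add_distrib]
      exact sum_congr rfl fun _ _ => by push_cast; ring
    rw [hshift]
    push_cast at hsucc ⊢
    linear_combination (-2) * hsucc

lemma sum_range_sub_mul_sub (x y : ℝ) (p : ℕ) :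
    ∑ d ∈ range p, (x - d) * (y - d)
      = p * x * y - (x + y) * p * (p - 1) / 2 + p * (p - 1) * (2 * p - 1) / 6 := by
  induction p with
  | zero => simp
  | succ p ih => rw [sum_range_succ, ih]; push_cast; ring

/-- The last argument is the grid spacing, which makes the cubic homogeneous: the double sum of
`max (K - |i - j|) 0` over `i, j < m` is `triangleCubic m K (min m K) 1`. -/
noncomputable def triangleCubic (m K p e : ℝ) : ℝ :=
  2 * p * m * K - (m + K) * p * (p - e) + p * (p - e) * (2 * p - e) / 3 - m * K * e

lemma continuous_triangleCubic :
    Continuous fun x : ℝ × ℝ × ℝ × ℝ => triangleCubic x.1 x.2.1 x.2.2.1 x.2.2.2 := by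
  unfold triangleCubic
  fun_prop

lemma triangleCubic_div (m K p e s : ℝ) :
    triangleCubic (m / s) (K / s) (p / s) (e / s) = triangleCubic m K p e / s ^ 3 := by
  simp only [triangleCubic, div_eq_mul_inv]
  ring

lemma sum_range_sum_range_max_sub_abs_sub (m K : ℕ) :
    ∑ i ∈ range m, ∑ j ∈ range m, max ((K : ℝ) - |(i : ℝ) - j|) 0
      = triangleCubic m K (min m K : ℕ) 1 := by
  have htrunc : ∑ d ∈ range m, ((m : ℝ) - d) * max ((K : ℝ) - d) 0
      = ∑ d ∈ range (min m K), ((m : ℝ) - d) * ((K : ℝ) - d) := by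
    rw [← sum_range_add_sum_Ico _ (min_le_left m K)]
    have hfar : ∑ d ∈ Ico (min m K) m, ((m : ℝ) - d) * max ((K : ℝ) - d) 0 = 0 := by
      refine sum_eq_zero fun d hd => ?_
      have hKd : (K : ℝ) ≤ d := by
        have := mem_Ico.mp hd
        exact_mod_cast (show K ≤ d by omega)
      rw [max_eq_right (by linarith), mul_zero]
    rw [hfar, add_zero]
    refine sum_congr rfl fun d hd => ?_
    have hdK : (d : ℝ) ≤ K := by
      have := mem_range.mp hd
      exact_mod_cast (show d ≤ K by omega)
    rw [max_eq_left (by linarith)]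
  rw [sum_range_sum_range_comp_abs_sub (fun x => max ((K : ℝ) - x) 0), htrunc,
    sum_range_sub_mul_sub, sub_zero, max_eq_left (Nat.cast_nonneg K), triangleCubic]
  ring

lemma nu₁_eq_triangleCubic {c₁ c₂ : ℝ} (hc₁ : 0 < c₁) (hc₂ : c₂ ≠ 1) :
    nu₁ c₁ c₂ = triangleCubic (c₁ * (c₂ - 1)) c₁ (min (c₁ * (c₂ - 1)) c₁) 0
      / (c₁ * (c₂ - 1)) ^ 2 := by
  have hc₂' : c₂ - 1 ≠ 0 := sub_ne_zero.mpr hc₂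
  rcases le_total c₂ 2 with h | h
  · rw [min_eq_left (by nlinarith), nu₁, max_eq_left (pow_nonneg (by linarith) 3), triangleCubic]
    field_simp
    ring
  · rw [min_eq_right (by nlinarith), nu₁, max_eq_right (Odd.pow_nonpos (by decide) (by linarith)),
      triangleCubic]
    field_simp
    ring

lemma triangleCubic_rescale {s m : ℝ} (hs : s ≠ 0) (hm : m ≠ 0) (K p : ℝ) :
    (s * m ^ 2)⁻¹ * triangleCubic m K p 1
      = triangleCubic (m / s) (K / s) (p / s) s⁻¹ / (m / s) ^ 2 := by
  rw [← one_div s, triangleCubic_div]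
  field_simp

lemma tendsto_sqrt_natCast_atTop : Tendsto (fun n : ℕ => Real.sqrt n) atTop atTop :=
  Real.tendsto_sqrt_atTop.comp tendsto_natCast_atTop_atTop

lemma tendsto_natCeil_mul_sqrt_div_sqrt {c : ℝ} (hc : 0 ≤ c) :
    Tendsto (fun n : ℕ => (⌈c * Real.sqrt n⌉₊ : ℝ) / Real.sqrt n) atTop (𝓝 c) :=
  (tendsto_nat_ceil_mul_div_atTop hc).comp tendsto_sqrt_natCast_atTop

lemma tendsto_Nn_sub_Kn_add_one_div_sqrt {c₁ c₂ : ℝ} (hc₁ : 0 ≤ c₁) (hc₂ : 1 ≤ c₂) :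
    Tendsto (fun n => ((Nn c₁ c₂ n - Kn c₁ n + 1 : ℕ) : ℝ) / Real.sqrt n) atTop
      (𝓝 (c₁ * (c₂ - 1))) := by
  rw [show c₁ * (c₂ - 1) = c₁ * c₂ - c₁ + 0 by ring]
  refine (((tendsto_natCeil_mul_sqrt_div_sqrt (by positivity)).sub
    (tendsto_natCeil_mul_sqrt_div_sqrt hc₁)).add
    (tendsto_inv_atTop_zero.comp tendsto_sqrt_natCast_atTop)).congr fun n => ?_
  have hKN : Kn c₁ n ≤ Nn c₁ c₂ n :=
    Nat.ceil_mono (mul_le_mul_of_nonneg_right (le_mul_of_one_le_right hc₁ hc₂)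
      (Real.sqrt_nonneg _))
  rw [Nat.cast_add, Nat.cast_sub hKN, Nat.cast_one, Nn, Kn]
  simp only [Function.comp_apply]
  ring

/-- The deterministic limit
`(1/(√n (N_n - K_n + 1)²)) ∑_{i,j=0}^{N_n - K_n} max(K_n - |i - j|, 0) → ν₁`. -/
theorem double_sum_covariance_tendsto_nu₁
    (c₁ c₂ : ℝ) (hc₁ : 0 < c₁) (hc₂ : 1 < c₂) :
    Tendsto (fun n : ℕ =>
        (Real.sqrt n * ((Nn c₁ c₂ n - Kn c₁ n + 1 : ℕ) : ℝ) ^ 2)⁻¹ *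
          ∑ i ∈ Finset.range (Nn c₁ c₂ n - Kn c₁ n + 1),
            ∑ j ∈ Finset.range (Nn c₁ c₂ n - Kn c₁ n + 1),
              max ((Kn c₁ n : ℝ) - |(i : ℝ) - (j : ℝ)|) 0)
      atTop (nhds (nu₁ c₁ c₂)) := by
  have hK : Tendsto (fun n => (Kn c₁ n : ℝ) / Real.sqrt n) atTop (𝓝 c₁) :=
    tendsto_natCeil_mul_sqrt_div_sqrt hc₁.le
  have hm := tendsto_Nn_sub_Kn_add_one_div_sqrt hc₁.le hc₂.le
  have he : Tendsto (fun n : ℕ => (Real.sqrt n)⁻¹) atTop (𝓝 0) :=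
    tendsto_inv_atTop_zero.comp tendsto_sqrt_natCast_atTop
  have hp : Tendsto (fun n => ((min (Nn c₁ c₂ n - Kn c₁ n + 1) (Kn c₁ n) : ℕ) : ℝ) / Real.sqrt n)
      atTop (𝓝 (min (c₁ * (c₂ - 1)) c₁)) :=
    (hm.min hK).congr fun n => by rw [min_div_div_right (Real.sqrt_nonneg _), Nat.cast_min]
  have hlim := ((continuous_triangleCubic.tendsto _).comp
    (hm.prodMk_nhds (hK.prodMk_nhds (hp.prodMk_nhds he)))).div (hm.pow 2)
    (pow_ne_zero 2 (mul_ne_zero hc₁.ne' (sub_ne_zero.mpr hc₂.ne')))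
  rw [nu₁_eq_triangleCubic hc₁ hc₂.ne']
  refine hlim.congr' ?_
  filter_upwards [eventually_ge_atTop 1] with n hn
  rw [sum_range_sum_range_max_sub_abs_sub, triangleCubic_rescale (by positivity) (by positivity)]
  rfl
end

section
/- For each n ∈ ℕ let X_{n,0}, …, X_{n,n} and U_{n,0}, …, U_{n,n} be real random variables on a common probability space such that (U_{n,i})_{0≤i≤n} are i.i.d. with E[U_{n,0}] = 0 and E[U_{n,0}²] = ω² (the common law not depending on n), and such that the sequence Q_n = Σ_{i=1}^{n} (X_{n,i} − X_{n,i−1})² is bounded in probability. Then the noise-variance estimator ω̂²_n = (1/(2n)) Σ_{i=1}^{n} ((X_{n,i} + U_{n,i}) − (X_{n,i−1} + U_{n,i−1}))² converges in probability to ω² as n → ∞. -/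
/-!
Write `ΔY_i = Y_{n,i+1} - Y_{n,i}` and `[Y]_n = ∑_{i<n} (ΔY_i)²`. Then
`[X + U]_n = [X]_n + [U]_n + 2 ∑ ΔX_i ΔU_i`, and by Cauchy–Schwarz the cross sum is at most
`√([X]_n [U]_n)`. Since `[X]_n` is bounded in probability, `[X]_n / 2n → 0`, so it suffices
that `[U]_n / 2n → ω²`. Expanding the squares, `[U]_n / 2n` is the mean of two averages of
`n` squares `U_{n,i}²`, which tend to `ω²` by the weak law of large numbers, minus the average
of the products `U_{n,i} U_{n,i+1}`. These products are orthogonal in `L²` with second moment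
`ω⁴`, so their average tends to `0` by Chebyshev's inequality.
-/

open MeasureTheory ProbabilityTheory Filter Topology

namespace MeasureTheory.TendstoInMeasure

variable {α ι E F G : Type*} {m : MeasurableSpace α} {μ : Measure α}

theorem comp₂ [PseudoEMetricSpace E] [PseudoEMetricSpace F] [PseudoEMetricSpace G]
    [IsFiniteMeasure μ] {φ : E → F → G} {f : ℕ → α → E} {g : ℕ → α → F} {f₀ : α → E}
    {g₀ : α → F} (hf : TendstoInMeasure μ f atTop f₀) (hφ : Continuous φ.uncurry)
    (hg : TendstoInMeasure μ g atTop g₀) (hf_meas : ∀ n, AEStronglyMeasurable (f n) μ)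
    (hg_meas : ∀ n, AEStronglyMeasurable (g n) μ) :
    TendstoInMeasure μ (fun n ω => φ (f n ω) (g n ω)) atTop (fun ω => φ (f₀ ω) (g₀ ω)) := by
  rw [exists_seq_tendstoInMeasure_atTop_iff
    fun n => hφ.comp_aestronglyMeasurable₂ (hf_meas n) (hg_meas n)]
  intro ns hns
  obtain ⟨ns₁, hns₁, hf_ae⟩ := (hf.comp hns.tendsto_atTop).exists_seq_tendsto_ae
  obtain ⟨ns₂, hns₂, hg_ae⟩ := (hg.comp (hns.comp hns₁).tendsto_atTop).exists_seq_tendsto_ae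
  refine ⟨ns₁ ∘ ns₂, hns₁.comp hns₂, ?_⟩
  filter_upwards [hf_ae, hg_ae] with ω hfω hgω
  exact (hφ.tendsto _).comp ((hfω.comp hns₂.tendsto_atTop).prodMk_nhds hgω)

theorem of_norm_le [SeminormedAddCommGroup E] [SeminormedAddCommGroup F] {l : Filter ι}
    {f : ι → α → E} {g : ι → α → F} (hg : TendstoInMeasure μ g l 0)
    (hfg : ∀ i ω, ‖f i ω‖ ≤ ‖g i ω‖) : TendstoInMeasure μ f l 0 := by
  intro ε hε
  refine tendsto_of_tendsto_of_tendsto_of_le_of_le tendsto_const_nhds (hg ε hε)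
    (fun _ => zero_le) fun i => measure_mono fun ω hω => ?_
  simp only [Set.mem_ofPred_eq, Pi.zero_apply, edist_zero_right] at hω ⊢
  exact hω.trans (enorm_le_iff_norm_le.2 (hfg i ω))

end MeasureTheory.TendstoInMeasure

namespace ProbabilityTheory

variable {Ω : Type*} {mΩ : MeasurableSpace Ω} {μ : Measure Ω}

def BoundedInProbability (μ : Measure Ω) (ξ : ℕ → Ω → ℝ) : Prop :=
  ∀ ε : ℝ, 0 < ε → ∃ C : ℝ, 0 < C ∧ ∀ n, μ {ω | C < |ξ n ω|} ≤ ENNReal.ofReal ε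

theorem BoundedInProbability.tendstoInMeasure_mul_of_tendsto_zero [IsFiniteMeasure μ]
    {ξ : ℕ → Ω → ℝ} (hξ : BoundedInProbability μ ξ) {c : ℕ → ℝ} (hc : Tendsto c atTop (𝓝 0)) :
    TendstoInMeasure μ (fun n ω => c n * ξ n ω) atTop 0 := by
  rw [tendstoInMeasure_iff_measureReal_norm]
  intro ε hε
  rw [Metric.tendsto_atTop]
  intro η hη
  obtain ⟨C, hC, hξC⟩ := hξ (η / 2) (half_pos hη)
  obtain ⟨N, hN⟩ := Metric.tendsto_atTop.1 hc (ε / C) (div_pos hε hC)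
  refine ⟨N, fun n hn => ?_⟩
  have hsub : {ω | ε ≤ ‖c n * ξ n ω - (0 : Ω → ℝ) ω‖} ⊆ {ω | C < |ξ n ω|} := by
    intro ω hω
    simp only [Set.mem_ofPred_eq, Pi.zero_apply, sub_zero, Real.norm_eq_abs, abs_mul] at hω ⊢
    by_contra! hle
    have hcn : |c n| < ε / C := by simpa using hN n hn
    rw [lt_div_iff₀ hC] at hcn
    nlinarith [abs_nonneg (c n)]
  rw [Real.dist_0_eq_abs, abs_of_nonneg measureReal_nonneg]
  calc μ.real _ ≤ μ.real {ω | C < |ξ n ω|} := measureReal_mono hsub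
    _ ≤ η / 2 := ENNReal.toReal_le_of_le_ofReal (half_pos hη).le (hξC n)
    _ < η := half_lt_self hη

theorem integral_sum_sq_of_orthogonal {ι : Type*} [LinearOrder ι] {s : Finset ι}
    {g : ι → Ω → ℝ} (hg : ∀ i ∈ s, MemLp (g i) 2 μ)
    (horth : ∀ i ∈ s, ∀ j ∈ s, i < j → ∫ ω, g i ω * g j ω ∂μ = 0) :
    ∫ ω, (∑ i ∈ s, g i ω) ^ 2 ∂μ = ∑ i ∈ s, ∫ ω, g i ω ^ 2 ∂μ := by
  have hint : ∀ i ∈ s, ∀ j ∈ s, Integrable (fun ω => g i ω * g j ω) μ :=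
    fun i hi j hj => (hg i hi).integrable_mul (hg j hj)
  have horth' : ∀ i ∈ s, ∀ j ∈ s, i ≠ j → ∫ ω, g i ω * g j ω ∂μ = 0 := by
    intro i hi j hj hij
    rcases hij.lt_or_gt with h | h
    · exact horth i hi j hj h
    · simpa only [mul_comm] using horth j hj i hi h
  simp_rw [sq, Finset.sum_mul_sum]
  rw [integral_finsetSum _ fun i hi => integrable_finsetSum _ (hint i hi)]
  refine Finset.sum_congr rfl fun i hi => ?_
  rw [integral_finsetSum _ (hint i hi), Finset.sum_eq_single_of_mem i hi
    fun j hj hji => horth' i hi j hj hji.symm]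

theorem tendstoInMeasure_average_zero_of_orthogonal [IsFiniteMeasure μ] {g : ℕ → ℕ → Ω → ℝ}
    {K : ℝ} (hg : ∀ n i, i < n → MemLp (g n i) 2 μ)
    (horth : ∀ n i j, i < j → j < n → ∫ ω, g n i ω * g n j ω ∂μ = 0)
    (hK : ∀ n i, i < n → ∫ ω, g n i ω ^ 2 ∂μ ≤ K) :
    TendstoInMeasure μ (fun (n : ℕ) ω => (n : ℝ)⁻¹ * ∑ i ∈ Finset.range n, g n i ω) atTop 0 := by
  rw [tendstoInMeasure_iff_measureReal_norm]
  intro ε hε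
  refine squeeze_zero' (Eventually.of_forall fun n => measureReal_nonneg)
    ((eventually_ge_atTop 1).mono fun n hn => ?_)
    (by simpa using (tendsto_inv_atTop_nhds_zero_nat (𝕜 := ℝ)).const_mul (K / ε ^ 2))
  have hn : (0 : ℝ) < n := by exact_mod_cast hn
  have hL2 : ∀ i ∈ Finset.range n, MemLp (g n i) 2 μ :=
    fun i hi => hg n i (Finset.mem_range.1 hi)
  have hsecond : ∫ ω, ((n : ℝ)⁻¹ * ∑ i ∈ Finset.range n, g n i ω) ^ 2 ∂μ ≤ K * (n : ℝ)⁻¹ := by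
    simp_rw [mul_pow]
    rw [integral_const_mul, integral_sum_sq_of_orthogonal hL2 fun i _ j hj hij =>
      horth n i j hij (Finset.mem_range.1 hj)]
    calc ((n : ℝ)⁻¹) ^ 2 * ∑ i ∈ Finset.range n, ∫ ω, g n i ω ^ 2 ∂μ
        ≤ ((n : ℝ)⁻¹) ^ 2 * ∑ i ∈ Finset.range n, K := by
          gcongr with i hi
          exact hK n i (Finset.mem_range.1 hi)
      _ = K * (n : ℝ)⁻¹ := by field_simp; simp
  have hmarkov := mul_meas_ge_le_integral_of_nonneg (Eventually.of_forall fun ω => sq_nonneg _)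
    (((memLp_finsetSum _ hL2).const_mul (n : ℝ)⁻¹).integrable_sq) (ε ^ 2)
  have hset : {ω | ε ≤ ‖(n : ℝ)⁻¹ * ∑ i ∈ Finset.range n, g n i ω - (0 : Ω → ℝ) ω‖}
      = {ω | ε ^ 2 ≤ ((n : ℝ)⁻¹ * ∑ i ∈ Finset.range n, g n i ω) ^ 2} := by
    ext ω
    simp [sq_le_sq, abs_of_pos hε]
  rw [hset, div_mul_eq_mul_div, le_div_iff₀' (by positivity)]
  linarith

theorem iIndepFun.integral_mul_eq_zero_of_notMem {ι : Type*} {f : ι → Ω → ℝ}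
    (hf : iIndepFun f μ) (hmeas : ∀ i, Measurable (f i)) {a : ι} (ha : μ[f a] = 0)
    {T : Finset ι} (haT : a ∉ T) {φ : (T → ℝ) → ℝ} (hφ : Measurable φ) :
    ∫ ω, f a ω * φ (fun t => f t ω) ∂μ = 0 := by
  have hind : IndepFun (f a) (fun ω => φ fun t : T => f t ω) μ :=
    (hf.indepFun_finset {a} T (Finset.disjoint_singleton_left.2 haT) hmeas).comp
      (measurable_pi_apply (⟨a, Finset.mem_singleton_self a⟩ : ({a} : Finset ι))) hφ
  rw [hind.integral_fun_mul_eq_mul_integral (hmeas a).aestronglyMeasurable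
    (hφ.comp (measurable_pi_lambda _ fun t => hmeas t)).aestronglyMeasurable, ha, zero_mul]

/-- The event `{|n⁻¹ ∑_{i<n} V n i - E Y| ≥ ε}` has the same probability as for the first `n`
terms of an i.i.d. sequence with the law of `Y`, because both rows have the law
`(law Y)^⊗n`; for such a sequence the strong law applies. -/
theorem tendstoInMeasure_average_of_iIndepFun_identDistrib [IsProbabilityMeasure μ]
    {E : Type*} [NormedAddCommGroup E] [NormedSpace ℝ E] [CompleteSpace E] [MeasurableSpace E]
    [BorelSpace E] [SecondCountableTopology E] {V : ℕ → ℕ → Ω → E} {Y : Ω → E}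
    (hV : ∀ n i, Measurable (V n i)) (hY : Integrable Y μ)
    (hindep : ∀ n, iIndepFun (fun i : Fin n => V n i) μ)
    (hident : ∀ n i, i < n → IdentDistrib (V n i) Y μ μ) :
    TendstoInMeasure μ (fun (n : ℕ) ω => (n : ℝ)⁻¹ • ∑ i ∈ Finset.range n, V n i ω) atTop
      (fun _ => μ[Y]) := by
  set P := Measure.infinitePi fun _ : ℕ => μ.map Y
  have : IsProbabilityMeasure (μ.map Y) := Measure.isProbabilityMeasure_map hY.aemeasurable
  have hcoord : ∀ i, IdentDistrib (fun x : ℕ → E => x i) Y P μ := fun i =>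
    ⟨(measurable_pi_apply i).aemeasurable, hY.aemeasurable, Measure.infinitePi_map_eval _ i⟩
  have hP_indep : iIndepFun (fun i (x : ℕ → E) => x i) P :=
    iIndepFun_infinitePi fun _ => measurable_id
  have hSLLN : TendstoInMeasure P (fun (n : ℕ) x => (n : ℝ)⁻¹ • ∑ i ∈ Finset.range n, x i)
      atTop (fun _ => μ[Y]) := by
    rw [← (hcoord 0).integral_eq]
    exact tendstoInMeasure_of_tendsto_ae (fun n => by fun_prop)
      (strong_law_ae _ ((hcoord 0).integrable_iff.2 hY) (fun i j hij => hP_indep.indepFun hij)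
        fun i => (hcoord i).trans (hcoord 0).symm)
  have hlaw : ∀ n, μ.map (fun ω (i : Fin n) => V n i ω) = P.map (fun x (i : Fin n) => x i) := by
    intro n
    rw [(hindep n).map_fun_eq_pi_map (f := fun i : Fin n => V n i)
        (fun i => (hV n i).aemeasurable),
      (hP_indep.precomp Fin.val_injective).map_fun_eq_pi_map
        (fun i => (measurable_pi_apply _).aemeasurable)]
    congr 1
    ext1 i
    rw [(hident n i i.isLt).map_eq, (hcoord i).map_eq]
  intro ε hε
  convert hSLLN ε hε using 2 with n
  have hS : MeasurableSet {v : Fin n → E | ε ≤ edist ((n : ℝ)⁻¹ • ∑ i, v i) μ[Y]} :=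
    measurableSet_le measurable_const (by fun_prop)
  have := congrArg (· {v : Fin n → E | ε ≤ edist ((n : ℝ)⁻¹ • ∑ i, v i) μ[Y]}) (hlaw n)
  rw [Measure.map_apply (by fun_prop) hS, Measure.map_apply (by fun_prop) hS] at this
  simpa [Set.preimage, Finset.sum_range] using this

end ProbabilityTheory

def realizedVariance (u : ℕ → ℝ) (n : ℕ) : ℝ := ∑ i ∈ Finset.range n, (u (i + 1) - u i) ^ 2

@[fun_prop]
theorem Measurable.aestronglyMeasurable_realizedVariance {Ω : Type*} {mΩ : MeasurableSpace Ω}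
    {μ : Measure Ω} {f : Ω → ℕ → ℝ} (hf : Measurable f) (n : ℕ) :
    AEStronglyMeasurable (fun ω => realizedVariance (f ω) n) μ := by
  unfold realizedVariance
  fun_prop

theorem realizedVariance_eq (u : ℕ → ℝ) (n : ℕ) :
    realizedVariance u n = ∑ i ∈ Finset.range n, u i ^ 2 + ∑ i ∈ Finset.range n, u (i + 1) ^ 2
      - 2 * ∑ i ∈ Finset.range n, u i * u (i + 1) := by
  rw [realizedVariance, Finset.mul_sum, ← Finset.sum_add_distrib, ← Finset.sum_sub_distrib]
  exact Finset.sum_congr rfl fun i _ => by ring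

theorem abs_mul_realizedVariance_add_sub_le {c : ℝ} (hc : 0 ≤ c) (u v : ℕ → ℝ) (n : ℕ) :
    |c * realizedVariance (u + v) n - c * realizedVariance u n - c * realizedVariance v n|
      ≤ 2 * √(c * realizedVariance u n * (c * realizedVariance v n)) := by
  set S := ∑ i ∈ Finset.range n, (u (i + 1) - u i) * (v (i + 1) - v i)
  have hexpand :
      realizedVariance (u + v) n = realizedVariance u n + realizedVariance v n + 2 * S := by
    simp only [realizedVariance, S, Finset.mul_sum, ← Finset.sum_add_distrib, Pi.add_apply]
    exact Finset.sum_congr rfl fun i _ => by ring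
  have hCS : |S| ≤ √(realizedVariance u n * realizedVariance v n) :=
    Real.abs_le_sqrt (Finset.sum_mul_sq_le_sq_mul_sq _ _ _)
  calc |c * realizedVariance (u + v) n - c * realizedVariance u n - c * realizedVariance v n|
      = 2 * (c * |S|) := by
        rw [hexpand, show c * (realizedVariance u n + realizedVariance v n + 2 * S)
          - c * realizedVariance u n - c * realizedVariance v n = 2 * c * S by ring,
          abs_mul, abs_mul, abs_of_nonneg hc, abs_two, mul_assoc]
    _ ≤ 2 * (c * √(realizedVariance u n * realizedVariance v n)) := by gcongr
    _ = 2 * √(c * realizedVariance u n * (c * realizedVariance v n)) := by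
        rw [show c * realizedVariance u n * (c * realizedVariance v n)
          = c ^ 2 * (realizedVariance u n * realizedVariance v n) by ring,
          Real.sqrt_mul (sq_nonneg c), Real.sqrt_sq hc]

section IIDNoise

variable {Ω : Type*} {mΩ : MeasurableSpace Ω} {μ : Measure Ω} [IsProbabilityMeasure μ]
  {U : ℕ → ℕ → Ω → ℝ} {w : ℝ}

theorem tendstoInMeasure_average_sq_shift (hUmeas : ∀ n i, Measurable (U n i))
    (hUindep : ∀ n, iIndepFun (fun i : Fin (n + 1) => U n i.val) μ)
    (hUident : ∀ n i, i ≤ n → IdentDistrib (U n i) (U 0 0) μ μ) (hUL2 : MemLp (U 0 0) 2 μ)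
    (hUvar : ∫ ω, U 0 0 ω ^ 2 ∂μ = w ^ 2) {k : ℕ} (hk : k ≤ 1) :
    TendstoInMeasure μ (fun (n : ℕ) ω => (n : ℝ)⁻¹ • ∑ i ∈ Finset.range n, U n (i + k) ω ^ 2)
      atTop (fun _ => w ^ 2) := by
  rw [← hUvar]
  refine tendstoInMeasure_average_of_iIndepFun_identDistrib
    (V := fun n i ω => U n (i + k) ω ^ 2) (fun n i => (hUmeas n _).pow_const 2)
    hUL2.integrable_sq (fun n => ?_)
    (fun n i hi => (hUident n (i + k) (by omega)).comp (measurable_id.pow_const 2))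
  exact ((hUindep n).comp (fun _ x => x ^ 2) fun _ => measurable_id.pow_const 2).precomp
    (g := fun i : Fin n => (⟨i + k, by omega⟩ : Fin (n + 1)))
    (fun i j h => Fin.ext (by simpa using congrArg Fin.val h))

theorem tendstoInMeasure_average_mul_succ (hUmeas : ∀ n i, Measurable (U n i))
    (hUindep : ∀ n, iIndepFun (fun i : Fin (n + 1) => U n i.val) μ)
    (hUident : ∀ n i, i ≤ n → IdentDistrib (U n i) (U 0 0) μ μ) (hUL2 : MemLp (U 0 0) 2 μ)
    (hUmean : ∫ ω, U 0 0 ω ∂μ = 0) (hUvar : ∫ ω, U 0 0 ω ^ 2 ∂μ = w ^ 2) :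
    TendstoInMeasure μ
      (fun (n : ℕ) ω => (n : ℝ)⁻¹ * ∑ i ∈ Finset.range n, U n i ω * U n (i + 1) ω) atTop 0 := by
  have hsq_ident : ∀ n i, i ≤ n →
      IdentDistrib (fun ω => U n i ω ^ 2) (fun ω => U 0 0 ω ^ 2) μ μ :=
    fun n i hi => (hUident n i hi).comp (measurable_id.pow_const 2)
  have hneighbours : ∀ n i, i < n → IndepFun (U n i) (U n (i + 1)) μ := fun n i hi =>
    (hUindep n).indepFun (i := ⟨i, by omega⟩) (j := ⟨i + 1, by omega⟩) (by simp [Fin.ext_iff])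
  have hprod_sq : ∀ n i, i < n → Integrable (fun ω => (U n i ω * U n (i + 1) ω) ^ 2) μ ∧
      ∫ ω, (U n i ω * U n (i + 1) ω) ^ 2 ∂μ = w ^ 2 * w ^ 2 := by
    intro n i hi
    have hind : IndepFun (fun ω => U n i ω ^ 2) (fun ω => U n (i + 1) ω ^ 2) μ :=
      (hneighbours n i hi).comp (measurable_id.pow_const 2) (measurable_id.pow_const 2)
    simp_rw [mul_pow]
    refine ⟨hind.integrable_mul ((hsq_ident n i (by omega)).integrable_iff.2 hUL2.integrable_sq)
      ((hsq_ident n (i + 1) hi).integrable_iff.2 hUL2.integrable_sq), ?_⟩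
    rw [hind.integral_fun_mul_eq_mul_integral (by fun_prop) (by fun_prop),
      (hsq_ident n i (by omega)).integral_eq, (hsq_ident n (i + 1) hi).integral_eq, hUvar]
  refine tendstoInMeasure_average_zero_of_orthogonal (K := w ^ 2 * w ^ 2)
    (fun n i hi => (memLp_two_iff_integrable_sq (by fun_prop)).2 (hprod_sq n i hi).1)
    (fun n i j hij hjn => ?_) (fun n i hi => (hprod_sq n i hi).2.le)
  -- `j + 1` exceeds `i`, `i + 1` and `j`, so the centred factor `U_{n,j+1}` splits off.
  have key := (hUindep n).integral_mul_eq_zero_of_notMem (fun k => hUmeas n k)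
    (a := ⟨j + 1, by omega⟩) ((hUident n (j + 1) hjn).integral_eq.trans hUmean)
    (T := {⟨i, by omega⟩, ⟨i + 1, by omega⟩, ⟨j, by omega⟩}) (by simp [Fin.ext_iff]; omega)
    (φ := fun y => y ⟨⟨i, by omega⟩, by simp⟩ * y ⟨⟨i + 1, by omega⟩, by simp⟩
      * y ⟨⟨j, by omega⟩, by simp⟩)
    (by fun_prop)
  rw [← key]
  congr 1 with ω
  dsimp only
  ring

theorem tendstoInMeasure_realizedVariance_of_iid (hUmeas : ∀ n i, Measurable (U n i))
    (hUindep : ∀ n, iIndepFun (fun i : Fin (n + 1) => U n i.val) μ)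
    (hUident : ∀ n i, i ≤ n → IdentDistrib (U n i) (U 0 0) μ μ) (hUL2 : MemLp (U 0 0) 2 μ)
    (hUmean : ∫ ω, U 0 0 ω ∂μ = 0) (hUvar : ∫ ω, U 0 0 ω ^ 2 ∂μ = w ^ 2) :
    TendstoInMeasure μ
      (fun (n : ℕ) ω => (2 * (n : ℝ))⁻¹ * realizedVariance (fun i => U n i ω) n)
      atTop (fun _ => w ^ 2) := by
  have hsq₀ := tendstoInMeasure_average_sq_shift hUmeas hUindep hUident hUL2 hUvar zero_le_one
  have hsq₁ := tendstoInMeasure_average_sq_shift hUmeas hUindep hUident hUL2 hUvar le_rfl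
  have hcross := tendstoInMeasure_average_mul_succ hUmeas hUindep hUident hUL2 hUmean hUvar
  have hlim := (hsq₀.comp₂ (φ := fun x y => (x + y) / 2) (by fun_prop) hsq₁ (by fun_prop)
    (by fun_prop)).comp₂ (φ := fun x y => x - y) (by fun_prop) hcross (by fun_prop) (by fun_prop)
  convert hlim using 3 with n ω
  · rw [realizedVariance_eq]
    simp only [smul_eq_mul, add_zero]
    ring
  · simp

end IIDNoise

/-- **Consistency of the noise-variance estimator `ω̂²` (Zhang–Mykland–Aït-Sahalia).**
If for each `n` the noise variables `U_{n,0}, …, U_{n,n}` are i.i.d. centered with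
variance `w²` (common law not depending on `n`), and the realised quadratic variation
of the signal `X` is bounded in probability, then
`ω̂²_n = (2n)⁻¹ ∑_{i=1}^n ((X_{n,i}+U_{n,i}) - (X_{n,i-1}+U_{n,i-1}))² → w²`
in probability. -/
theorem noise_variance_estimator_consistent
    {Ω : Type*} [MeasureSpace Ω] [IsProbabilityMeasure (ℙ : Measure Ω)]
    (w : ℝ) (X U : ℕ → ℕ → Ω → ℝ)
    (hXmeas : ∀ n i, Measurable (X n i))
    (hUmeas : ∀ n i, Measurable (U n i))
    (hUindep : ∀ n, iIndepFun
      (fun i : Fin (n + 1) => U n i.val) ℙ)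
    (hUident : ∀ n i, i ≤ n → IdentDistrib (U n i) (U 0 0) ℙ ℙ)
    (hUL2 : MemLp (U 0 0) 2 ℙ)
    (hUmean : ∫ ω, U 0 0 ω ∂ℙ = 0)
    (hUvar : ∫ ω, (U 0 0 ω) ^ 2 ∂ℙ = w ^ 2)
    (hQbdd : ∀ ε : ℝ, 0 < ε → ∃ C : ℝ, 0 < C ∧ ∀ n : ℕ,
      ℙ {ω | C < |∑ i ∈ Finset.range n, (X n (i + 1) ω - X n i ω) ^ 2|}
        ≤ ENNReal.ofReal ε) :
    TendstoInMeasure ℙ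
      (fun (n : ℕ) (ω : Ω) => (2 * (n : ℝ))⁻¹ *
        ∑ i ∈ Finset.range n,
          ((X n (i + 1) ω + U n (i + 1) ω) - (X n i ω + U n i ω)) ^ 2)
      atTop (fun _ => w ^ 2) := by
  have hc : Tendsto (fun n : ℕ => (2 * (n : ℝ))⁻¹) atTop (𝓝 0) :=
    tendsto_inv_atTop_zero.comp (tendsto_natCast_atTop_atTop.const_mul_atTop two_pos)
  have hsignal : TendstoInMeasure ℙ
      (fun (n : ℕ) ω => (2 * (n : ℝ))⁻¹ * realizedVariance (fun i => X n i ω) n) atTop 0 :=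
    BoundedInProbability.tendstoInMeasure_mul_of_tendsto_zero hQbdd hc
  have hnoise := tendstoInMeasure_realizedVariance_of_iid hUmeas hUindep hUident hUL2 hUmean hUvar
  have hbound := hsignal.comp₂ (φ := fun x y => 2 * √(x * y)) (by fun_prop) hnoise
    (by fun_prop) (by fun_prop)
  simp only [Pi.zero_apply, zero_mul, Real.sqrt_zero, mul_zero] at hbound
  have hcross := hbound.of_norm_le (f := fun (n : ℕ) ω =>
    (2 * (n : ℝ))⁻¹ * realizedVariance (fun i => X n i ω + U n i ω) n
      - (2 * (n : ℝ))⁻¹ * realizedVariance (fun i => X n i ω) n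
      - (2 * (n : ℝ))⁻¹ * realizedVariance (fun i => U n i ω) n) fun n ω =>
    (abs_mul_realizedVariance_add_sub_le (by positivity) (fun i => X n i ω)
      (fun i => U n i ω) n).trans (Real.le_norm_self _)
  have hlim := (hsignal.comp₂ (φ := (· + ·)) (by fun_prop) hnoise (by fun_prop)
    (by fun_prop)).comp₂ (φ := (· + ·)) (by fun_prop) hcross (by fun_prop) (by fun_prop)
  convert hlim using 3 with n ω
  · simp only [realizedVariance]
    ring
  · simp
end

section
/- Let (U_i)_{i∈ℕ} be i.i.d. real random variables with E[U_0] = 0, E[U_0²] = ω² and E[U_0⁴] < ∞. Then the sequence √n · ((1/(2n)) Σ_{i=1}^{n} (U_i − U_{i−1})² − ω²) is bounded in probability; in particular (1/(2n)) Σ_{i=1}^{n} (U_i − U_{i−1})² converges to ω² in probability at rate n^{−1/2}. -/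
/-!
With `X i = (U (i+1) - U i)²` the statistic is `√n ((2n)⁻¹ ∑_{i<n} X i - w²)`. Independence of
`U (i+1)` and `U i` gives `E[X i] = 2w²`, so the statistic is centred; finite fourth moments put
`X i` in `L²`, and `(X i)` is stationary and `1`-dependent. Hence each row of the covariance matrix
of `X 0, …, X (n-1)` has at most three nonzero entries, each at most `Var[X 0]`, so
`Var[∑_{i<n} X i] ≤ 3 n Var[X 0]` and the statistic has variance at most `(3/4) Var[X 0]`,
uniformly in `n`. Chebyshev's inequality concludes.
-/

open MeasureTheory ProbabilityTheory Finset

section Moments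

variable {Ω : Type*} {mΩ : MeasurableSpace Ω} {μ : Measure Ω}

lemma memLp_two_sq_of_memLp_four {X : Ω → ℝ} (hX : MemLp X 4 μ) :
    MemLp (fun ω => X ω ^ 2) 2 μ := by
  have : ENNReal.HolderTriple 4 4 2 := ⟨by
    rw [show (4 : ENNReal) = 2 * 2 by norm_num, ENNReal.mul_inv (by simp) (by simp), ← mul_add,
      ENNReal.inv_two_add_inv_two, mul_one]⟩
  simpa only [sq] using hX.mul' hX

variable [IsFiniteMeasure μ]

lemma two_mul_covariance_le_variance_add_variance {X Y : Ω → ℝ} (hX : MemLp X 2 μ)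
    (hY : MemLp Y 2 μ) : 2 * cov[X, Y; μ] ≤ Var[X; μ] + Var[Y; μ] := by
  have := variance_nonneg (X - Y) μ
  rw [variance_sub hX hY] at this
  linarith

lemma ProbabilityTheory.IndepFun.integral_sub_sq_of_integral_eq_zero {X Y : Ω → ℝ} (h : X ⟂ᵢ[μ] Y)
    (hX : MemLp X 2 μ) (hY : MemLp Y 2 μ) (hX₀ : μ[X] = 0) (hY₀ : μ[Y] = 0) :
    ∫ ω, (X ω - Y ω) ^ 2 ∂μ = ∫ ω, X ω ^ 2 ∂μ + ∫ ω, Y ω ^ 2 ∂μ := by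
  have hXY₀ : μ[fun ω => X ω - Y ω] = 0 := by
    rw [integral_sub (hX.integrable one_le_two) (hY.integrable one_le_two), hX₀, hY₀, sub_zero]
  rw [← variance_of_integral_eq_zero hX.aemeasurable hX₀,
    ← variance_of_integral_eq_zero hY.aemeasurable hY₀,
    ← variance_of_integral_eq_zero (X := fun ω => X ω - Y ω) (hX.aemeasurable.sub hY.aemeasurable)
      hXY₀,
    variance_fun_sub hX hY, h.covariance_eq_zero hX hY]
  ring

theorem variance_sum_range_le_of_covariance_eq_zero {X : ℕ → Ω → ℝ} {m : ℕ} {M : ℝ}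
    (hX : ∀ i, MemLp (X i) 2 μ) (hvar : ∀ i, Var[X i; μ] ≤ M)
    (hcov : ∀ i j, i + m < j → cov[X i, X j; μ] = 0) (n : ℕ) :
    Var[∑ i ∈ range n, X i; μ] ≤ (2 * m + 1) * M * n := by
  have hM : 0 ≤ M := (variance_nonneg _ _).trans (hvar 0)
  have hrow : ∀ i, ∑ j ∈ range n, cov[X i, X j; μ] ≤ (2 * m + 1) * M := by
    intro i
    calc ∑ j ∈ range n, cov[X i, X j; μ]
        ≤ ∑ j ∈ range n with j ∈ Icc (i - m) (i + m), M := by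
          rw [sum_filter]
          refine sum_le_sum fun j _ => ?_
          split_ifs with hj
          · linarith [two_mul_covariance_le_variance_add_variance (hX i) (hX j), hvar i, hvar j]
          · rw [mem_Icc, not_and_or, not_le, not_le] at hj
            rcases hj with hj | hj
            · rw [covariance_comm, hcov j i (by omega)]
            · rw [hcov i j hj]
      _ ≤ (2 * m + 1) * M := by
          have hcard : #{j ∈ range n | j ∈ Icc (i - m) (i + m)} ≤ 2 * m + 1 :=
            (card_le_card fun j hj => (mem_filter.1 hj).2).trans (by rw [Nat.card_Icc]; omega)
          rw [sum_const, nsmul_eq_mul]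
          gcongr
          exact_mod_cast hcard
  calc Var[∑ i ∈ range n, X i; μ] = ∑ i ∈ range n, ∑ j ∈ range n, cov[X i, X j; μ] :=
        variance_sum' fun i _ => hX i
    _ ≤ ∑ _i ∈ range n, (2 * m + 1) * M := sum_le_sum fun i _ => hrow i
    _ = (2 * m + 1) * M * n := by rw [sum_const, card_range, nsmul_eq_mul]; ring

theorem exists_forall_measure_lt_abs_le_of_variance_le {ι : Type*} {Y : ι → Ω → ℝ} {M ε : ℝ}
    (hY : ∀ n, MemLp (Y n) 2 μ) (hmean : ∀ n, μ[Y n] = 0) (hvar : ∀ n, Var[Y n; μ] ≤ M)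
    (hε : 0 < ε) : ∃ C, 0 < C ∧ ∀ n, μ {ω | C < |Y n ω|} ≤ ENNReal.ofReal ε := by
  set C := √(max M ε / ε)
  have hC2 : C ^ 2 = max M ε / ε := Real.sq_sqrt (by positivity)
  have hC : 0 < C := Real.sqrt_pos.2 (by positivity)
  refine ⟨C, hC, fun n => ?_⟩
  calc μ {ω | C < |Y n ω|} ≤ μ {ω | C ≤ |Y n ω - μ[Y n]|} :=
        measure_mono fun ω hω => by simpa [hmean] using hω.le
    _ ≤ ENNReal.ofReal (Var[Y n; μ] / C ^ 2) := meas_ge_le_variance_div_sq (hY n) hC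
    _ ≤ ENNReal.ofReal ε := by
        gcongr
        rw [div_le_iff₀ (by positivity), hC2, mul_div_cancel₀ _ hε.ne']
        exact (hvar n).trans (le_max_left _ _)

end Moments

section NormalizedSum

variable {Ω : Type*} {mΩ : MeasurableSpace Ω} {μ : Measure Ω} [IsProbabilityMeasure μ]
  {X : ℕ → Ω → ℝ} {c a : ℝ}

lemma integral_sqrt_mul_inv_mul_sum_range_sub (hc : c ≠ 0) (hX : ∀ i, Integrable (X i) μ)
    (hmean : ∀ i, μ[X i] = c * a) (n : ℕ) :
    μ[fun ω => √n * ((c * n)⁻¹ * ∑ i ∈ range n, X i ω - a)] = 0 := by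
  rw [integral_const_mul, integral_sub ((integrable_finsetSum _ fun i _ => hX i).const_mul _)
    (integrable_const a), integral_const_mul, integral_finsetSum _ fun i _ => hX i]
  simp only [hmean, sum_const, card_range, nsmul_eq_mul, integral_const, probReal_univ, one_smul]
  rcases eq_or_ne n 0 with rfl | hn
  · simp
  · field_simp
    ring

lemma variance_sqrt_mul_inv_mul_sum_range_sub_le {K : ℝ} (hX : ∀ i, AEStronglyMeasurable (X i) μ)
    (hK : 0 ≤ K) {n : ℕ} (hvar : Var[∑ i ∈ range n, X i; μ] ≤ K * n) :
    Var[fun ω => √n * ((c * n)⁻¹ * ∑ i ∈ range n, X i ω - a); μ] ≤ K / c ^ 2 := by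
  have hsum : AEStronglyMeasurable (fun ω => ∑ i ∈ range n, X i ω) μ :=
    aestronglyMeasurable_fun_sum _ fun i _ => hX i
  rw [variance_const_mul, variance_sub_const (hsum.const_mul _),
    variance_const_mul, Real.sq_sqrt n.cast_nonneg, ← sum_fn]
  rcases eq_or_ne n 0 with rfl | hn
  · rw [Nat.cast_zero, zero_mul]
    positivity
  · calc (n : ℝ) * ((c * n)⁻¹ ^ 2 * Var[∑ i ∈ range n, X i; μ])
        ≤ n * ((c * n)⁻¹ ^ 2 * (K * n)) := by gcongr
      _ = K / c ^ 2 := by field_simp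

end NormalizedSum

section IncrementsOfIID

variable {Ω β : Type*} {mΩ : MeasurableSpace Ω} {mβ : MeasurableSpace β} {μ : Measure Ω}
  {U : ℕ → Ω → β}

lemma identDistrib_succ_prodMk [IsFiniteMeasure μ] (hindep : iIndepFun U μ)
    (hident : ∀ i, IdentDistrib (U i) (U 0) μ μ) (i : ℕ) :
    IdentDistrib (fun ω => (U (i + 1) ω, U i ω)) (fun ω => (U 1 ω, U 0 ω)) μ μ :=
  ((hident (i + 1)).trans (hident 1).symm).prodMk (hident i) (hindep.indepFun (by omega))
    (hindep.indepFun one_ne_zero)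

lemma indepFun_succ_prodMk (hmeas : ∀ i, Measurable (U i)) (hindep : iIndepFun U μ) {i j : ℕ}
    (hij : i + 1 < j) :
    (fun ω => (U (i + 1) ω, U i ω)) ⟂ᵢ[μ] (fun ω => (U (j + 1) ω, U j ω)) :=
  hindep.indepFun_prodMk_prodMk hmeas _ _ _ _ (by omega) (by omega) (by omega) (by omega)

end IncrementsOfIID

/-- For i.i.d. centered noise with variance `w²` and finite fourth moment, the
sequence `√n ((2n)⁻¹ ∑_{i=1}^n (U_i - U_{i-1})² - w²)` is bounded in probability
(i.e. the estimator `ω̂²` converges to `w²` in probability at rate `n^{-1/2}`). -/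
theorem noise_variance_estimator_rate
    {Ω : Type*} [MeasureSpace Ω] [IsProbabilityMeasure (ℙ : Measure Ω)]
    (w : ℝ) (U : ℕ → Ω → ℝ)
    (hUmeas : ∀ i, Measurable (U i))
    (hUindep : iIndepFun U ℙ)
    (hUident : ∀ i, IdentDistrib (U i) (U 0) ℙ ℙ)
    (hUL4 : MemLp (U 0) 4 ℙ)
    (hUmean : ∫ ω, U 0 ω ∂ℙ = 0)
    (hUvar : ∫ ω, (U 0 ω) ^ 2 ∂ℙ = w ^ 2) :
    ∀ ε : ℝ, 0 < ε → ∃ C : ℝ, 0 < C ∧ ∀ n : ℕ,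
      ℙ {ω | C < |Real.sqrt n *
          ((2 * (n : ℝ))⁻¹ * ∑ i ∈ Finset.range n, (U (i + 1) ω - U i ω) ^ 2
            - w ^ 2)|}
        ≤ ENNReal.ofReal ε := by
  intro ε hε
  set X : ℕ → Ω → ℝ := fun i ω => (U (i + 1) ω - U i ω) ^ 2
  have hφ : Measurable fun p : ℝ × ℝ => (p.1 - p.2) ^ 2 := by fun_prop
  have hXident : ∀ i, IdentDistrib (X i) (X 0) ℙ ℙ := fun i =>
    (identDistrib_succ_prodMk hUindep hUident i).comp hφ
  have hU1 : IdentDistrib (U 1) (U 0) ℙ ℙ := hUident 1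
  have hU2 : MemLp (U 0) 2 ℙ := hUL4.mono_exponent (by norm_num)
  have hX0 : MemLp (X 0) 2 ℙ :=
    memLp_two_sq_of_memLp_four ((hU1.symm.memLp_snd hUL4).sub hUL4)
  have hX : ∀ i, MemLp (X i) 2 ℙ := fun i => (hXident i).symm.memLp_snd hX0
  have hXmean : ∀ i, ℙ[X i] = 2 * w ^ 2 := fun i => by
    rw [(hXident i).integral_eq]
    change ∫ ω, (U 1 ω - U 0 ω) ^ 2 = _
    rw [(hUindep.indepFun one_ne_zero).integral_sub_sq_of_integral_eq_zero
      (hU1.symm.memLp_snd hU2) hU2 (hU1.integral_eq.trans hUmean) hUmean,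
      hU1.sq.integral_eq, hUvar]
    ring
  have hXsum := variance_sum_range_le_of_covariance_eq_zero (m := 1) hX
    (fun i => (hXident i).variance_eq.le)
    (fun i j hij => ((indepFun_succ_prodMk hUmeas hUindep hij).comp hφ hφ).covariance_eq_zero
      (hX i) (hX j))
  exact exists_forall_measure_lt_abs_le_of_variance_le
    (fun n => (((memLp_finsetSum _ fun i _ => hX i).const_mul _).sub (memLp_const _)).const_mul _)
    (integral_sqrt_mul_inv_mul_sum_range_sub two_ne_zero (fun i => (hX i).integrable one_le_two)
      hXmean)
    (fun n => variance_sqrt_mul_inv_mul_sum_range_sub_le (fun i => (hX i).1)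
      (mul_nonneg (by norm_num) (variance_nonneg _ _)) (hXsum n)) hε
end

section
/- For each n ∈ ℕ let M_n ∈ ℕ, let (𝒢_{n,m})_{0≤m≤M_n} be a filtration (an increasing family of sub-σ-algebras) on a probability space, and let γ_{n,m} (1 ≤ m ≤ M_n) be square-integrable real random variables such that γ_{n,m} is 𝒢_{n,m}-measurable. If Σ_{m=1}^{M_n} E[γ_{n,m}² | 𝒢_{n,m−1}] → 0 in probability as n → ∞, then Σ_{m=1}^{M_n} (γ_{n,m} − E[γ_{n,m} | 𝒢_{n,m−1}]) → 0 in probability as n → ∞. -/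
/-!
Fix `n` and `δ > 0`, and let `A_m = ∑_{k ≤ m} E[γ_k² | 𝒢_{k-1}]`, which is `𝒢_{m-1}`-measurable
and nondecreasing in `m`. Restricting each increment `γ_m - E[γ_m | 𝒢_{m-1}]` to the predictable
event `{A_m ≤ δ}` keeps the increments orthogonal in `L²`, and the conditional variance bound
gives each of them squared norm at most `E[1_{A_m ≤ δ} E[γ_m² | 𝒢_{m-1}]]`; these add up to at
most `δ`. The truncated sum agrees with the original one `S_n` on `{A_M ≤ δ}`, so Chebyshev gives
`P(|S_n| ≥ ε) ≤ P(A_{M_n} ≥ δ) + δ / ε²`. Let `n → ∞`, then `δ → 0`.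
-/

open MeasureTheory ProbabilityTheory Filter Finset

section General

variable {Ω : Type*} {m m0 : MeasurableSpace Ω} {μ : Measure Ω}

lemma integral_mul_sub_condExp_eq_zero [IsFiniteMeasure μ] (hm : m ≤ m0) {Y f : Ω → ℝ}
    (hY : StronglyMeasurable[m] Y) (hY2 : MemLp Y 2 μ) (hf : MemLp f 2 μ) :
    ∫ ω, Y ω * (f ω - μ[f|m] ω) ∂μ = 0 := by
  have hYf : Integrable (Y * f) μ := hY2.integrable_mul hf
  have hYe : Integrable (Y * μ[f|m]) μ := hY2.integrable_mul (hf.condExp one_le_two)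
  have hpull : ∫ ω, (Y * μ[f|m]) ω ∂μ = ∫ ω, (Y * f) ω ∂μ := by
    rw [← integral_condExp hm (f := Y * f)]
    exact integral_congr_ae (condExp_mul_of_stronglyMeasurable_left hY hYf
      (hf.integrable one_le_two)).symm
  calc ∫ ω, Y ω * (f ω - μ[f|m] ω) ∂μ = ∫ ω, (Y * f) ω - (Y * μ[f|m]) ω ∂μ := by
        simp only [Pi.mul_apply, mul_sub]
    _ = 0 := by rw [integral_sub hYf hYe, hpull, sub_self]

lemma setIntegral_sq_sub_condExp_le [IsFiniteMeasure μ] (hm : m ≤ m0) {s : Set Ω}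
    (hs : MeasurableSet[m] s) {f : Ω → ℝ} (hf : MemLp f 2 μ) :
    ∫ ω in s, (f ω - μ[f|m] ω) ^ 2 ∂μ ≤ ∫ ω in s, μ[f ^ 2|m] ω ∂μ := by
  rw [← setIntegral_condVar (hm := hm) (hf.sub (hf.condExp one_le_two)).integrable_sq hs]
  exact setIntegral_mono_ae integrable_condVar.integrableOn integrable_condExp.integrableOn
    (condVar_ae_le_condExp_sq hm hf)

lemma integral_sq_sum_of_orthogonal {ι : Type*} [LinearOrder ι] {s : Finset ι}
    {D : ι → Ω → ℝ} (hD : ∀ i ∈ s, MemLp (D i) 2 μ)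
    (horth : ∀ i ∈ s, ∀ j ∈ s, i < j → ∫ ω, D i ω * D j ω ∂μ = 0) :
    ∫ ω, (∑ i ∈ s, D i ω) ^ 2 ∂μ = ∑ i ∈ s, ∫ ω, D i ω ^ 2 ∂μ := by
  have hint : ∀ i ∈ s, ∀ j ∈ s, Integrable (fun ω => D i ω * D j ω) μ :=
    fun i hi j hj => (hD i hi).integrable_mul (hD j hj)
  have hdiag : ∀ i ∈ s, ∑ j ∈ s, ∫ ω, D i ω * D j ω ∂μ = ∫ ω, D i ω ^ 2 ∂μ := by
    intro i hi
    rw [Finset.sum_eq_single_of_mem i hi fun j hj hji => ?_]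
    · simp only [sq]
    · rcases hji.lt_or_gt with h | h
      · simpa only [mul_comm] using horth j hj i hi h
      · exact horth i hi j hj h
  calc ∫ ω, (∑ i ∈ s, D i ω) ^ 2 ∂μ = ∫ ω, ∑ i ∈ s, ∑ j ∈ s, D i ω * D j ω ∂μ := by
        simp_rw [sq, Finset.sum_mul_sum]
    _ = ∑ i ∈ s, ∑ j ∈ s, ∫ ω, D i ω * D j ω ∂μ := by
        rw [integral_finsetSum _ fun i hi => integrable_finsetSum _ (hint i hi)]
        exact Finset.sum_congr rfl fun i hi => integral_finsetSum _ (hint i hi)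
    _ = ∑ i ∈ s, ∫ ω, D i ω ^ 2 ∂μ := Finset.sum_congr rfl hdiag

lemma meas_ge_abs_le_integral_sq_div_sq [IsFiniteMeasure μ] {X : Ω → ℝ} (hX : MemLp X 2 μ)
    {c : ℝ} (hc : 0 < c) :
    μ {ω | c ≤ |X ω|} ≤ ENNReal.ofReal ((∫ ω, X ω ^ 2 ∂μ) / c ^ 2) := by
  have hset : {ω | c ≤ |X ω|} = {ω | c ^ 2 ≤ X ω ^ 2} := by
    ext ω
    simp only [Set.mem_ofPred_eq, ← sq_abs (X ω)]
    exact (pow_le_pow_iff_left₀ hc.le (abs_nonneg _) two_ne_zero).symm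
  have hmarkov := mul_meas_ge_le_integral_of_nonneg (ae_of_all μ fun ω => sq_nonneg (X ω))
    hX.integrable_sq (c ^ 2)
  rw [hset, ← ofReal_measureReal]
  exact ENNReal.ofReal_le_ofReal ((le_div_iff₀' (by positivity)).mpr hmarkov)

end General

lemma sum_Icc_ite_partialSum_le {a : ℕ → ℝ} (ha : ∀ k, 0 ≤ a k) {δ : ℝ} (hδ : 0 ≤ δ) (M : ℕ) :
    ∑ m ∈ Icc 1 M, (if ∑ k ∈ Icc 1 m, a k ≤ δ then a m else 0) ≤ δ := by
  -- bounding the sum by the partial sum of `a` as well makes the induction go through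
  suffices ∑ m ∈ Icc 1 M, (if ∑ k ∈ Icc 1 m, a k ≤ δ then a m else 0)
      ≤ min (∑ k ∈ Icc 1 M, a k) δ from this.trans (min_le_right _ _)
  induction M with
  | zero => simpa using hδ
  | succ M ih =>
    rw [Finset.sum_Icc_succ_top (Nat.le_add_left 1 M),
      Finset.sum_Icc_succ_top (Nat.le_add_left 1 M)]
    split_ifs with h
    · have := ih.trans (min_le_left _ _)
      exact le_min (by linarith) (by linarith)
    · rw [add_zero]
      exact ih.trans (min_le_min_right δ (le_add_of_nonneg_right (ha _)))

section Filtration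

variable {Ω : Type*} {m0 : MeasurableSpace Ω} {μ : Measure Ω}

lemma integral_sq_sum_indicator_sub_condExp_le [IsFiniteMeasure μ] (ℱ : Filtration ℕ m0)
    {γ : ℕ → Ω → ℝ} {s : ℕ → Set Ω} {M : ℕ}
    (hL2 : ∀ m ∈ Icc 1 M, MemLp (γ m) 2 μ)
    (hadapted : ∀ m ∈ Icc 1 M, StronglyMeasurable[ℱ m] (γ m))
    (hs : ∀ m ∈ Icc 1 M, MeasurableSet[ℱ (m - 1)] (s m)) :
    ∫ ω, (∑ m ∈ Icc 1 M, (s m).indicator (γ m - μ[γ m|ℱ (m - 1)]) ω) ^ 2 ∂μ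
      ≤ ∑ m ∈ Icc 1 M, ∫ ω in s m, μ[γ m ^ 2|ℱ (m - 1)] ω ∂μ := by
  set D : ℕ → Ω → ℝ := fun m => (s m).indicator (γ m - μ[γ m|ℱ (m - 1)])
  have hD2 : ∀ m ∈ Icc 1 M, MemLp (D m) 2 μ := fun m hm =>
    ((hL2 m hm).sub ((hL2 m hm).condExp one_le_two)).indicator (ℱ.le _ _ (hs m hm))
  have hDmeas : ∀ m ∈ Icc 1 M, StronglyMeasurable[ℱ m] (D m) := fun m hm =>
    ((hadapted m hm).sub (stronglyMeasurable_condExp.mono (ℱ.mono (Nat.sub_le m 1)))).indicator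
      (ℱ.mono (Nat.sub_le m 1) _ (hs m hm))
  have horth : ∀ i ∈ Icc 1 M, ∀ j ∈ Icc 1 M, i < j → ∫ ω, D i ω * D j ω ∂μ = 0 := by
    intro i hi j hj hij
    have hDi : StronglyMeasurable[ℱ (j - 1)] ((s j).indicator (D i)) :=
      ((hDmeas i hi).mono (ℱ.mono (Nat.le_sub_one_of_lt hij))).indicator (hs j hj)
    rw [← integral_mul_sub_condExp_eq_zero (ℱ.le (j - 1)) hDi
      ((hD2 i hi).indicator (ℱ.le _ _ (hs j hj))) (hL2 j hj)]
    congr 1 with ω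
    by_cases hω : ω ∈ s j <;> simp [D, hω]
  rw [integral_sq_sum_of_orthogonal hD2 horth]
  refine Finset.sum_le_sum fun m hm => ?_
  calc ∫ ω, D m ω ^ 2 ∂μ = ∫ ω in s m, (γ m ω - μ[γ m|ℱ (m - 1)] ω) ^ 2 ∂μ := by
        rw [← integral_indicator (ℱ.le _ _ (hs m hm))]
        congr 1 with ω
        by_cases hω : ω ∈ s m <;> simp [D, hω]
    _ ≤ ∫ ω in s m, μ[γ m ^ 2|ℱ (m - 1)] ω ∂μ :=
        setIntegral_sq_sub_condExp_le (ℱ.le _) (hs m hm) (hL2 m hm)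

lemma sum_setIntegral_partialSum_le [IsProbabilityMeasure μ] {a : ℕ → Ω → ℝ}
    (ha : ∀ k, StronglyMeasurable (a k)) (hai : ∀ k, Integrable (a k) μ)
    (ha0 : ∀ᵐ ω ∂μ, ∀ k, 0 ≤ a k ω) {δ : ℝ} (hδ : 0 ≤ δ) (M : ℕ) :
    ∑ m ∈ Icc 1 M, ∫ ω in {ω | ∑ k ∈ Icc 1 m, a k ω ≤ δ}, a m ω ∂μ ≤ δ := by
  have hs : ∀ m, MeasurableSet {ω | ∑ k ∈ Icc 1 m, a k ω ≤ δ} := fun m =>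
    measurableSet_le (Finset.measurable_fun_sum _ fun k _ => (ha k).measurable) measurable_const
  simp_rw [← integral_indicator (hs _)]
  rw [← integral_finsetSum _ fun m _ => (hai m).indicator (hs m)]
  calc ∫ ω, ∑ m ∈ Icc 1 M, {ω | ∑ k ∈ Icc 1 m, a k ω ≤ δ}.indicator (a m) ω ∂μ
      ≤ ∫ _, δ ∂μ := by
        refine integral_mono_ae (integrable_finsetSum _ fun m _ => (hai m).indicator (hs m))
          (integrable_const δ) ?_
        filter_upwards [ha0] with ω hω
        simpa [Set.indicator_apply] using sum_Icc_ite_partialSum_le hω hδ M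
    _ = δ := by simp

theorem meas_ge_abs_sum_sub_condExp_le [IsProbabilityMeasure μ] (ℱ : Filtration ℕ m0)
    {γ : ℕ → Ω → ℝ} {M : ℕ}
    (hL2 : ∀ m ∈ Icc 1 M, MemLp (γ m) 2 μ)
    (hadapted : ∀ m ∈ Icc 1 M, StronglyMeasurable[ℱ m] (γ m))
    {δ ε : ℝ} (hδ : 0 ≤ δ) (hε : 0 < ε) :
    μ {ω | ε ≤ |∑ m ∈ Icc 1 M, (γ m ω - μ[γ m|ℱ (m - 1)] ω)|}
      ≤ μ {ω | δ ≤ |∑ m ∈ Icc 1 M, μ[γ m ^ 2|ℱ (m - 1)] ω|} + ENNReal.ofReal (δ / ε ^ 2) := by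
  set c : ℕ → Ω → ℝ := fun m => μ[γ m ^ 2|ℱ (m - 1)]
  set A : ℕ → Ω → ℝ := fun m ω => ∑ k ∈ Icc 1 m, c k ω
  set s : ℕ → Set Ω := fun m => {ω | A m ω ≤ δ}
  set T : Ω → ℝ := fun ω => ∑ m ∈ Icc 1 M, (s m).indicator (γ m - μ[γ m|ℱ (m - 1)]) ω
  have hc0 : ∀ᵐ ω ∂μ, ∀ k, 0 ≤ c k ω :=
    ae_all_iff.mpr fun k => condExp_nonneg (ae_of_all _ fun ω => sq_nonneg (γ k ω))
  have hs : ∀ m, MeasurableSet[ℱ (m - 1)] (s m) := fun m =>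
    measurableSet_le (Finset.measurable_fun_sum _ fun k hk => (stronglyMeasurable_condExp.mono
      (ℱ.mono (Nat.sub_le_sub_right (mem_Icc.mp hk).2 1))).measurable) measurable_const
  have hT2 : MemLp T 2 μ := memLp_finsetSum _ fun m hm =>
    ((hL2 m hm).sub ((hL2 m hm).condExp one_le_two)).indicator (ℱ.le _ _ (hs m))
  have hT : ∫ ω, T ω ^ 2 ∂μ ≤ δ :=
    (integral_sq_sum_indicator_sub_condExp_le ℱ hL2 hadapted fun m _ => hs m).trans
      (sum_setIntegral_partialSum_le (fun k => stronglyMeasurable_condExp.mono (ℱ.le _))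
        (fun k => integrable_condExp) hc0 hδ M)
  have hcover : {ω | ε ≤ |∑ m ∈ Icc 1 M, (γ m ω - μ[γ m|ℱ (m - 1)] ω)|}
      ≤ᵐ[μ] ({ω | δ ≤ |A M ω|} ∪ {ω | ε ≤ |T ω|} : Set Ω) := by
    filter_upwards [hc0] with ω hω hS
    by_cases hAM : A M ω ≤ δ
    · have hTS : T ω = ∑ m ∈ Icc 1 M, (γ m ω - μ[γ m|ℱ (m - 1)] ω) :=
        Finset.sum_congr rfl fun m hm => Set.indicator_of_mem (s := s m)
          ((Finset.sum_le_sum_of_subset_of_nonneg (Icc_subset_Icc_right (mem_Icc.mp hm).2)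
            fun k _ _ => hω k).trans hAM) _
      right
      show ε ≤ |T ω|
      rw [hTS]
      exact hS
    · exact Or.inl ((le_of_not_ge hAM).trans (le_abs_self _))
  calc μ {ω | ε ≤ |∑ m ∈ Icc 1 M, (γ m ω - μ[γ m|ℱ (m - 1)] ω)|}
      ≤ μ {ω | δ ≤ |A M ω|} + μ {ω | ε ≤ |T ω|} :=
        (measure_mono_ae hcover).trans (measure_union_le _ _)
    _ ≤ μ {ω | δ ≤ |A M ω|} + ENNReal.ofReal (δ / ε ^ 2) := by
        gcongr
        exact (meas_ge_abs_le_integral_sq_div_sq hT2 hε).trans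
          (ENNReal.ofReal_le_ofReal (by gcongr))

end Filtration

lemma tendstoInMeasure_zero_of_meas_ge_le {Ω ι : Type*} {m0 : MeasurableSpace Ω} {μ : Measure Ω}
    {l : Filter ι} {S A : ι → Ω → ℝ}
    (hbound : ∀ i, ∀ δ ε : ℝ, 0 ≤ δ → 0 < ε →
      μ {ω | ε ≤ |S i ω|} ≤ μ {ω | δ ≤ |A i ω|} + ENNReal.ofReal (δ / ε ^ 2))
    (hA : TendstoInMeasure μ A l fun _ => 0) : TendstoInMeasure μ S l fun _ => 0 := by
  rw [tendstoInMeasure_iff_dist] at hA ⊢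
  simp only [Real.dist_eq, sub_zero] at hA ⊢
  intro ε hε
  rw [ENNReal.tendsto_nhds_zero]
  intro η hη
  obtain ⟨r, -, hr0, hrη⟩ := ENNReal.lt_iff_exists_real_btwn.mp hη
  have hr : 0 < r := ENNReal.ofReal_pos.mp hr0
  -- with `δ = (r / 2) ε²` both error terms are at most `r / 2`
  filter_upwards [ENNReal.tendsto_nhds_zero.mp (hA (r / 2 * ε ^ 2) (by positivity))
    (ENNReal.ofReal (r / 2)) (ENNReal.ofReal_pos.mpr (half_pos hr))] with i hi
  calc μ {ω | ε ≤ |S i ω|}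
      ≤ μ {ω | r / 2 * ε ^ 2 ≤ |A i ω|} + ENNReal.ofReal (r / 2 * ε ^ 2 / ε ^ 2) :=
        hbound i _ _ (by positivity) hε
    _ ≤ ENNReal.ofReal (r / 2) + ENNReal.ofReal (r / 2) := by
        rw [mul_div_cancel_right₀ _ (by positivity)]
        gcongr
    _ = ENNReal.ofReal r := by
        rw [← ENNReal.ofReal_add (half_pos hr).le (half_pos hr).le, add_halves]
    _ ≤ η := hrη.le

def truncatedFiltration {Ω : Type*} {m0 : MeasurableSpace Ω} (M : ℕ) (G : ℕ → MeasurableSpace Ω)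
    (hle : ∀ m, m ≤ M → G m ≤ m0) (hmono : ∀ m m' : ℕ, m ≤ m' → m' ≤ M → G m ≤ G m') :
    Filtration ℕ m0 where
  seq m := G (min m M)
  mono' _ _ h := hmono _ _ (min_le_min_right M h) (min_le_right _ _)
  le' m := hle _ (min_le_right _ _)

lemma truncatedFiltration_of_le {Ω : Type*} {m0 : MeasurableSpace Ω} {M : ℕ}
    {G : ℕ → MeasurableSpace Ω} {hle : ∀ m, m ≤ M → G m ≤ m0}
    {hmono : ∀ m m' : ℕ, m ≤ m' → m' ≤ M → G m ≤ G m'} {m : ℕ} (hm : m ≤ M) :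
    truncatedFiltration M G hle hmono m = G m := by
  simp [truncatedFiltration, min_eq_left hm]

/-- **A Lenglart-type lemma.** If `γ_{n,m}` is square-integrable and
`𝒢_{n,m}`-measurable for a filtration `(𝒢_{n,m})_{0 ≤ m ≤ M_n}`, and the sums of
conditional second moments `∑_{m=1}^{M_n} E[γ_{n,m}² | 𝒢_{n,m-1}]` tend to zero in
probability, then the martingale-difference sums
`∑_{m=1}^{M_n} (γ_{n,m} - E[γ_{n,m} | 𝒢_{n,m-1}])` tend to zero in probability. -/
theorem lenglart_conditional_second_moment_criterion
    {Ω : Type*} [m0 : MeasureSpace Ω] [IsProbabilityMeasure (ℙ : Measure Ω)]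
    (M : ℕ → ℕ) (G : ℕ → ℕ → MeasurableSpace Ω)
    (hGle : ∀ n m, m ≤ M n → G n m ≤ (inferInstance : MeasurableSpace Ω))
    (hGmono : ∀ n, ∀ m m' : ℕ, m ≤ m' → m' ≤ M n → G n m ≤ G n m')
    (γ : ℕ → ℕ → Ω → ℝ)
    (hL2 : ∀ n m, 1 ≤ m → m ≤ M n → MemLp (γ n m) 2 ℙ)
    (hadapted : ∀ n m, 1 ≤ m → m ≤ M n → Measurable[G n m] (γ n m))
    (hcond : TendstoInMeasure ℙ
      (fun (n : ℕ) (ω : Ω) => ∑ m ∈ Finset.Icc 1 (M n),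
        condExp (G n (m - 1)) ℙ (fun ω' => (γ n m ω') ^ 2) ω)
      atTop (fun _ => (0 : ℝ))) :
    TendstoInMeasure ℙ
      (fun (n : ℕ) (ω : Ω) => ∑ m ∈ Finset.Icc 1 (M n),
        (γ n m ω - condExp (G n (m - 1)) ℙ (γ n m) ω))
      atTop (fun _ => (0 : ℝ)) := by
  set ℱ : ℕ → Filtration ℕ _ := fun n => truncatedFiltration (M n) (G n) (hGle n) (hGmono n)
  have hℱ : ∀ n, ∀ m ∈ Icc 1 (M n), ℱ n (m - 1) = G n (m - 1) := fun n m hm =>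
    truncatedFiltration_of_le ((Nat.sub_le m 1).trans (mem_Icc.mp hm).2)
  have hS : (fun n ω => ∑ m ∈ Icc 1 (M n), (γ n m ω - ℙ[γ n m|G n (m - 1)] ω))
      = fun n ω => ∑ m ∈ Icc 1 (M n), (γ n m ω - ℙ[γ n m|ℱ n (m - 1)] ω) := by
    ext n ω
    exact Finset.sum_congr rfl fun m hm => by rw [hℱ n m hm]
  have hA : (fun n ω => ∑ m ∈ Icc 1 (M n), ℙ[fun ω' => γ n m ω' ^ 2|G n (m - 1)] ω)
      = fun n ω => ∑ m ∈ Icc 1 (M n), ℙ[γ n m ^ 2|ℱ n (m - 1)] ω := by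
    ext n ω
    exact Finset.sum_congr rfl fun m hm => by rw [hℱ n m hm]; rfl
  rw [hS]
  rw [hA] at hcond
  refine tendstoInMeasure_zero_of_meas_ge_le (fun n δ ε hδ hε => ?_) hcond
  refine meas_ge_abs_sum_sub_condExp_le (ℱ n)
    (fun m hm => hL2 n m (mem_Icc.mp hm).1 (mem_Icc.mp hm).2) (fun m hm => ?_) hδ hε
  rw [truncatedFiltration_of_le (mem_Icc.mp hm).2]
  exact (hadapted n m (mem_Icc.mp hm).1 (mem_Icc.mp hm).2).stronglyMeasurable
end

section
/- Let σ > 0 and ω > 0, and for c₁ > 0, c₂ > 1 define β²(c₁, c₂) = (2 c₁ c₂ / ν₁(c₁,c₂)²) (ν₁(c₁,c₂) σ² + ν₂(c₁,c₂) ω²)². Then for all c₁ > 0 and c₂ > 1 one has β²(c₁, c₂) ≥ (256/(3√18)) σ³ ω, and equality holds for c₂ = 8/5 and c₁ = √(18/((c₂ − 1)(4 − c₂))) · (ω/σ) = (5/√2)(ω/σ); that is, the asymptotic conditional variance of the modulated realised volatility estimator for constant volatility σ is minimised by this choice of c₁ and c₂ and the minimal value equals (256/(3√18)) σ³ ω ≈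 20.11 σ³ ω. -/
/-- `ν₂ = 2 min(c₂ - 1, 1) / (c₁ (c₂ - 1)²)`. -/
noncomputable def nu₂ (c₁ c₂ : ℝ) : ℝ := 2 * min (c₂ - 1) 1 / (c₁ * (c₂ - 1) ^ 2)

/-- The asymptotic conditional variance of the modulated realised volatility for
constant volatility `σ` and noise variance `w²`:
`β²(c₁, c₂) = (2c₁c₂/ν₁²) (ν₁σ² + ν₂w²)²`. -/
noncomputable def betaSq (σ w c₁ c₂ : ℝ) : ℝ :=
  2 * c₁ * c₂ / (nu₁ c₁ c₂) ^ 2 *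
    (nu₁ c₁ c₂ * σ ^ 2 + nu₂ c₁ c₂ * w ^ 2) ^ 2

/-! With `a = ν₁(1, c₂)` and `b = ν₂(1, c₂)` one has `β² = 2c₂ (c₁² a σ² + b w²)² / (c₁³ a²)`,
since `ν₁` is linear and `ν₂` inversely proportional in `c₁`. Comparing squares, AM–GM for four
terms, `27 (x + y)⁴ ≥ 256 x³ y`, applied to `x = c₁² a σ²`, `y = b w²` eliminates `c₁`:
`(β²)² ≥ (1024/27) c₂² (b/a) σ⁶ w²`, with equality when `x = 3y`. On `(1, 2]` and on `[2, ∞)`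
the factor `c₂² b/a` is an explicit rational function, and `c₂² b/a - 32/3` is a positive
multiple of `(5c₂ - 8)²`, resp. `(3c₂ - 8)²`. -/

theorem pow_three_mul_le_add_pow_four {R : Type*} [CommRing R] [LinearOrder R]
    [IsStrictOrderedRing R] {a b : R} (ha : 0 ≤ a) (hb : 0 ≤ b) :
    256 * (a ^ 3 * b) ≤ 27 * (a + b) ^ 4 := by
  have key : 27 * (a + b) ^ 4 - 256 * (a ^ 3 * b) =
      (3 * b - a) ^ 2 * (3 * b ^ 2 + 14 * a * b + 27 * a ^ 2) := by
    ring
  have : 0 ≤ (3 * b - a) ^ 2 * (3 * b ^ 2 + 14 * a * b + 27 * a ^ 2) := by positivity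
  linarith

theorem nu₁_eq_mul_nu₁_one (c₁ c₂ : ℝ) : nu₁ c₁ c₂ = c₁ * nu₁ 1 c₂ := by
  simp only [nu₁, one_mul, mul_div_assoc]

theorem nu₂_eq_nu₂_one_div (c₁ c₂ : ℝ) : nu₂ c₁ c₂ = nu₂ 1 c₂ / c₁ := by
  simp only [nu₂, one_mul, div_div, mul_comm c₁]

theorem nu₁_one_of_le_two {c₂ : ℝ} (h₁ : 1 < c₂) (h₂ : c₂ ≤ 2) : nu₁ 1 c₂ = (4 - c₂) / 3 := by
  have : c₂ - 1 ≠ 0 := by linarith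
  rw [nu₁, max_eq_left (by positivity), one_mul,
    show 3 * c₂ - 4 + (2 - c₂) ^ 3 = (c₂ - 1) ^ 2 * (4 - c₂) by ring]
  field_simp

theorem nu₁_one_of_two_le {c₂ : ℝ} (h : 2 ≤ c₂) :
    nu₁ 1 c₂ = (3 * c₂ - 4) / (3 * (c₂ - 1) ^ 2) := by
  rw [nu₁, max_eq_right (Odd.pow_nonpos (by decide) (by linarith)), one_mul, add_zero]

theorem nu₂_one_of_le_two {c₂ : ℝ} (h₁ : 1 < c₂) (h₂ : c₂ ≤ 2) : nu₂ 1 c₂ = 2 / (c₂ - 1) := by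
  have : c₂ - 1 ≠ 0 := by linarith
  rw [nu₂, min_eq_left (by linarith)]
  field_simp

theorem nu₂_one_of_two_le {c₂ : ℝ} (h : 2 ≤ c₂) : nu₂ 1 c₂ = 2 / (c₂ - 1) ^ 2 := by
  rw [nu₂, min_eq_right (by linarith), one_mul, mul_one]

theorem nu₁_one_pos {c₂ : ℝ} (h : 1 < c₂) : 0 < nu₁ 1 c₂ := by
  rcases le_total c₂ 2 with h₂ | h₂
  · rw [nu₁_one_of_le_two h h₂]; linarith
  · rw [nu₁_one_of_two_le h₂]; apply div_pos <;> nlinarith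

theorem nu₂_one_pos {c₂ : ℝ} (h : 1 < c₂) : 0 < nu₂ 1 c₂ := by
  have : 0 < c₂ - 1 := by linarith
  unfold nu₂
  positivity

theorem le_sq_mul_nu₂_one_div_nu₁_one {c₂ : ℝ} (h : 1 < c₂) :
    32 / 3 ≤ c₂ ^ 2 * (nu₂ 1 c₂ / nu₁ 1 c₂) := by
  have : 0 < c₂ - 1 := by linarith
  rcases le_total c₂ 2 with h₂ | h₂
  · rw [nu₁_one_of_le_two h h₂, nu₂_one_of_le_two h h₂, div_div_div_eq, mul_div_assoc',
      le_div_iff₀ (mul_pos this (by linarith))]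
    nlinarith [sq_nonneg (5 * c₂ - 8)]
  · rw [nu₁_one_of_two_le h₂, nu₂_one_of_two_le h₂]
    have : 0 < (c₂ - 1) ^ 2 := by positivity
    field_simp
    rw [le_div_iff₀ (by linarith)]
    nlinarith [sq_nonneg (3 * c₂ - 8)]

theorem sq_mul_nu₂_one_div_nu₁_one_eight_fifths :
    (8 / 5 : ℝ) ^ 2 * (nu₂ 1 (8 / 5) / nu₁ 1 (8 / 5)) = 32 / 3 := by
  rw [nu₁_one_of_le_two (by norm_num) (by norm_num), nu₂_one_of_le_two (by norm_num) (by norm_num)]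
  norm_num

section betaSq

variable {σ w c₁ c₂ : ℝ}

theorem betaSq_nonneg (hc₁ : 0 ≤ c₁) (hc₂ : 0 ≤ c₂) : 0 ≤ betaSq σ w c₁ c₂ := by
  unfold betaSq
  positivity

theorem betaSq_eq_div (hc₁ : c₁ ≠ 0) (ha : nu₁ 1 c₂ ≠ 0) :
    betaSq σ w c₁ c₂ =
      2 * c₂ * (c₁ ^ 2 * nu₁ 1 c₂ * σ ^ 2 + nu₂ 1 c₂ * w ^ 2) ^ 2 / (c₁ ^ 3 * nu₁ 1 c₂ ^ 2) := by
  rw [betaSq, nu₁_eq_mul_nu₁_one, nu₂_eq_nu₂_one_div]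
  field_simp

theorem sq_mul_le_betaSq_sq (hc₁ : 0 < c₁) (ha : 0 < nu₁ 1 c₂) (hb : 0 ≤ nu₂ 1 c₂) :
    1024 / 27 * (c₂ ^ 2 * (nu₂ 1 c₂ / nu₁ 1 c₂)) * σ ^ 6 * w ^ 2 ≤ betaSq σ w c₁ c₂ ^ 2 := by
  have amgm := pow_three_mul_le_add_pow_four
    (by positivity : 0 ≤ c₁ ^ 2 * nu₁ 1 c₂ * σ ^ 2) (by positivity : 0 ≤ nu₂ 1 c₂ * w ^ 2)
  rw [betaSq_eq_div hc₁.ne' ha.ne', div_pow, le_div_iff₀ (by positivity)]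
  calc _ = 4 * c₂ ^ 2 * (256 * ((c₁ ^ 2 * nu₁ 1 c₂ * σ ^ 2) ^ 3 * (nu₂ 1 c₂ * w ^ 2))) / 27 := by
        field_simp
        ring
    _ ≤ 4 * c₂ ^ 2 * (27 * (c₁ ^ 2 * nu₁ 1 c₂ * σ ^ 2 + nu₂ 1 c₂ * w ^ 2) ^ 4) / 27 := by
        gcongr
    _ = _ := by ring

theorem betaSq_sq_of_balanced (hc₁ : c₁ ≠ 0) (ha : nu₁ 1 c₂ ≠ 0)
    (hbal : c₁ ^ 2 * nu₁ 1 c₂ * σ ^ 2 = 3 * (nu₂ 1 c₂ * w ^ 2)) :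
    betaSq σ w c₁ c₂ ^ 2 = 1024 / 27 * (c₂ ^ 2 * (nu₂ 1 c₂ / nu₁ 1 c₂)) * σ ^ 6 * w ^ 2 := by
  have hσ : σ ^ 6 = (3 * (nu₂ 1 c₂ * w ^ 2)) ^ 3 / (c₁ ^ 2 * nu₁ 1 c₂) ^ 3 := by
    rw [← hbal]
    field_simp
  rw [betaSq_eq_div hc₁ ha, hbal, hσ]
  field_simp
  ring

end betaSq

/-- **Optimal tuning constants (Section 3.2 of Podolskij–Vetter (2009)).**
For all `c₁ > 0`, `c₂ > 1` one has `β²(c₁,c₂) ≥ (256/(3√18)) σ³ w`, with equality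
for `c₂ = 8/5` and `c₁ = √(18/((c₂-1)(4-c₂))) · (w/σ) = (5/√2) (w/σ)`; i.e. the
asymptotic conditional variance is minimised by this choice and the minimum is
`(256/(3√18)) σ³ w ≈ 20.11 σ³ w`. -/
theorem betaSq_minimisation (σ w : ℝ) (hσ : 0 < σ) (hw : 0 < w) :
    (∀ c₁ c₂ : ℝ, 0 < c₁ → 1 < c₂ →
      256 / (3 * Real.sqrt 18) * σ ^ 3 * w ≤ betaSq σ w c₁ c₂) ∧
    Real.sqrt (18 / ((8 / 5 - 1) * (4 - 8 / 5))) = 5 / Real.sqrt 2 ∧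
    betaSq σ w (Real.sqrt (18 / ((8 / 5 - 1) * (4 - 8 / 5))) * (w / σ)) (8 / 5)
      = 256 / (3 * Real.sqrt 18) * σ ^ 3 * w := by
  have bound_sq : (256 / (3 * Real.sqrt 18) * σ ^ 3 * w) ^ 2 =
      1024 / 27 * (32 / 3) * σ ^ 6 * w ^ 2 := by
    rw [mul_pow, mul_pow, div_pow, mul_pow, Real.sq_sqrt (by norm_num)]
    ring
  refine ⟨fun c₁ c₂ hc₁ hc₂ => ?_, ?_, ?_⟩
  · refine le_of_sq_le_sq ?_ (betaSq_nonneg hc₁.le (by linarith))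
    calc _ = 1024 / 27 * (32 / 3) * σ ^ 6 * w ^ 2 := bound_sq
      _ ≤ 1024 / 27 * (c₂ ^ 2 * (nu₂ 1 c₂ / nu₁ 1 c₂)) * σ ^ 6 * w ^ 2 := by
        gcongr; exact le_sq_mul_nu₂_one_div_nu₁_one hc₂
      _ ≤ _ := sq_mul_le_betaSq_sq hc₁ (nu₁_one_pos hc₂) (nu₂_one_pos hc₂).le
  · rw [Real.sqrt_eq_iff_eq_sq (by norm_num) (by positivity), div_pow, Real.sq_sqrt (by norm_num)]
    norm_num
  · set c₁ := Real.sqrt (18 / ((8 / 5 - 1) * (4 - 8 / 5))) * (w / σ)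
    have hbal : c₁ ^ 2 * nu₁ 1 (8 / 5) * σ ^ 2 = 3 * (nu₂ 1 (8 / 5) * w ^ 2) := by
      rw [nu₁_one_of_le_two (by norm_num) (by norm_num),
        nu₂_one_of_le_two (by norm_num) (by norm_num), mul_pow, Real.sq_sqrt (by norm_num)]
      field_simp
      norm_num
    rw [← sq_eq_sq₀ (betaSq_nonneg (by positivity) (by norm_num)) (by positivity), bound_sq,
      betaSq_sq_of_balanced (by positivity) (nu₁_one_pos (by norm_num)).ne' hbal,
      sq_mul_nu₂_one_div_nu₁_one_eight_fifths]
end
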